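/- arXiv:0801.3008 — 4 statements merged into one kernel-verified Lean document; each statement's English description precedes it below -/
import Mathlib

section
/- For every n ≥ 2 and all elements x₁,…,xₙ, q of a commutative ring, ∏_{i=1}^{n}(xᵢ;q)₂ + ∑_{t=1}^{n} ∑_{1≤i₁<i₂<⋯<i_t≤n} (−1)ᵗ (q^{t−1} x_{i₁} x_{i₂} ⋯ x_{i_t}; q)₂ = (∏_{i=1}^{n}(1−q xᵢ)) · ∑_{t=1}^{n−1} (qᵗ − (−1)ᵗ) e_{t+1}(x₁,…,xₙ), where e_j denotes the j-th elementary symmetric polynomial in x₁,…,xₙ. -/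
open Finset

private lemma lascoux_prod_one_add {R : Type*} [CommRing R] {n : ℕ} (f : Fin n → R) :
    ∏ i, (1 + f i) = ∑ S ∈ (Finset.univ : Finset (Fin n)).powerset, ∏ i ∈ S, f i := by
  have h := Finset.prod_add f (fun _ => (1 : R)) Finset.univ
  simp only [Finset.prod_const_one, mul_one] at h
  rw [← h]
  exact Finset.prod_congr rfl fun i _ => by ring

private lemma lascoux_sum_pow_card {R : Type*} [CommRing R] {n : ℕ} (x : Fin n → R) (c : R) :
    ∑ S ∈ (Finset.univ : Finset (Fin n)).powerset, c ^ S.card * ∏ i ∈ S, x i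
      = ∏ i, (1 + c * x i) := by
  rw [lascoux_prod_one_add (fun i => c * x i)]
  refine Finset.sum_congr rfl fun S _ => ?_
  rw [Finset.prod_mul_distrib, Finset.prod_const]

private lemma lascoux_sum_powerset_card {M : Type*} [AddCommMonoid M] {n : ℕ}
    (f : Finset (Fin n) → M) :
    ∑ t ∈ Finset.range (n + 1), ∑ S ∈ Finset.powersetCard t (Finset.univ : Finset (Fin n)), f S
      = ∑ S ∈ (Finset.univ : Finset (Fin n)).powerset, f S := by
  rw [Finset.sum_powerset]
  simp [Finset.card_univ]

private lemma lascoux_mul_key {R : Type*} [CommRing R] (n : ℕ) (hn : 2 ≤ n)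
    (x : Fin n → R) (q : R) :
    q * ((∏ i, (1 - x i) * (1 - x i * q))
      + ∑ t ∈ Finset.Icc 1 n, ∑ S ∈ Finset.powersetCard t (Finset.univ : Finset (Fin n)),
          (-1 : R) ^ t *
            ((1 - q ^ (t - 1) * ∏ i ∈ S, x i) * (1 - (q ^ (t - 1) * ∏ i ∈ S, x i) * q)))
      = q * ((∏ i, (1 - q * x i)) *
          ∑ t ∈ Finset.Icc 1 (n - 1), (q ^ t - (-1 : R) ^ t) *
            ∑ S ∈ Finset.powersetCard (t + 1) (Finset.univ : Finset (Fin n)), ∏ i ∈ S, x i) := by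
  classical
  have hrange : Finset.range (n + 1) = insert 0 (Finset.Icc 1 n) := by
    ext a
    simp only [Finset.mem_range, Finset.mem_insert, Finset.mem_Icc]
    omega
  have h0 : (0 : ℕ) ∉ Finset.Icc 1 n := by simp
  have hIcc : Finset.Icc 1 n = insert 1 (Finset.Icc 2 n) := by
    ext a
    simp only [Finset.mem_Icc, Finset.mem_insert]
    omega
  have h1 : (1 : ℕ) ∉ Finset.Icc 2 n := by simp
  set P : R := ∏ i, (1 - x i) with hP
  set Q : R := ∏ i, (1 - q * x i) with hQ
  set T : R := ∏ i, (1 + q * x i) with hT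
  have hL1 : (∏ i, (1 - x i) * (1 - x i * q)) = P * Q := by
    rw [hP, hQ, ← Finset.prod_mul_distrib]
    exact Finset.prod_congr rfl fun i _ => by ring
  have e1 : ∑ S ∈ (Finset.univ : Finset (Fin n)).powerset, (-1 : R) ^ S.card = 0 := by
    have h := lascoux_sum_pow_card (fun _ : Fin n => (1 : R)) (-1 : R)
    simp only [Finset.prod_const_one, mul_one] at h
    rw [h, show ((1 : R) + -1) = 0 from by ring, Finset.prod_const]
    exact zero_pow (by simp [Finset.card_univ]; omega)
  have e2 : ∑ S ∈ (Finset.univ : Finset (Fin n)).powerset,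
      (-1 : R) ^ S.card * (q ^ S.card * ∏ i ∈ S, x i) = Q := by
    calc ∑ S ∈ (Finset.univ : Finset (Fin n)).powerset,
          (-1 : R) ^ S.card * (q ^ S.card * ∏ i ∈ S, x i)
        = ∑ S ∈ (Finset.univ : Finset (Fin n)).powerset, (-q) ^ S.card * ∏ i ∈ S, x i := by
          refine Finset.sum_congr rfl fun S _ => ?_
          rw [neg_pow q]; ring
      _ = ∏ i, (1 + -q * x i) := lascoux_sum_pow_card x (-q)
      _ = Q := Finset.prod_congr rfl fun i _ => by ring
  have e2' : ∑ S ∈ (Finset.univ : Finset (Fin n)).powerset,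
      (-1 : R) ^ S.card * ∏ i ∈ S, x i = P := by
    calc ∑ S ∈ (Finset.univ : Finset (Fin n)).powerset,
          (-1 : R) ^ S.card * ∏ i ∈ S, x i
        = ∏ i, (1 + -1 * x i) := lascoux_sum_pow_card x (-1)
      _ = P := Finset.prod_congr rfl fun i _ => by ring
  have e4 : ∑ S ∈ (Finset.univ : Finset (Fin n)).powerset,
      q ^ S.card * ∏ i ∈ S, x i = T := lascoux_sum_pow_card x q
  have e3 : ∑ S ∈ (Finset.univ : Finset (Fin n)).powerset,
      (-1 : R) ^ S.card * (q ^ S.card * ∏ i ∈ S, x i) ^ 2 = Q * T := by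
    calc ∑ S ∈ (Finset.univ : Finset (Fin n)).powerset,
          (-1 : R) ^ S.card * (q ^ S.card * ∏ i ∈ S, x i) ^ 2
        = ∑ S ∈ (Finset.univ : Finset (Fin n)).powerset,
            (-(q ^ 2)) ^ S.card * ∏ i ∈ S, (x i) ^ 2 := by
          refine Finset.sum_congr rfl fun S _ => ?_
          rw [neg_pow (q ^ 2), pow_right_comm q 2, Finset.prod_pow]
          ring
      _ = ∏ i, (1 + -(q ^ 2) * (x i) ^ 2) := lascoux_sum_pow_card (fun i => (x i) ^ 2) (-(q ^ 2))
      _ = Q * T := by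
          rw [hQ, hT, ← Finset.prod_mul_distrib]
          exact Finset.prod_congr rfl fun i _ => by ring
  have hH : ∑ S ∈ (Finset.univ : Finset (Fin n)).powerset,
      (-1 : R) ^ S.card * (q - (1 + q) * (q ^ S.card * ∏ i ∈ S, x i)
        + (q ^ S.card * ∏ i ∈ S, x i) ^ 2)
      = Q * T - (1 + q) * Q := by
    have expand : ∀ S ∈ (Finset.univ : Finset (Fin n)).powerset,
        (-1 : R) ^ S.card * (q - (1 + q) * (q ^ S.card * ∏ i ∈ S, x i)
          + (q ^ S.card * ∏ i ∈ S, x i) ^ 2)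
        = ((-1 : R) ^ S.card * q
            - (1 + q) * ((-1 : R) ^ S.card * (q ^ S.card * ∏ i ∈ S, x i)))
          + (-1 : R) ^ S.card * (q ^ S.card * ∏ i ∈ S, x i) ^ 2 := fun S _ => by ring
    rw [Finset.sum_congr rfl expand, Finset.sum_add_distrib,
      Finset.sum_sub_distrib, ← Finset.sum_mul, ← Finset.mul_sum, e1, e2, e3]
    ring
  have hA : q * (∑ t ∈ Finset.Icc 1 n, ∑ S ∈ Finset.powersetCard t (Finset.univ : Finset (Fin n)),
        (-1 : R) ^ t *
          ((1 - q ^ (t - 1) * ∏ i ∈ S, x i) * (1 - (q ^ (t - 1) * ∏ i ∈ S, x i) * q)))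
      = Q * T - (1 + q) * Q := by
    rw [Finset.mul_sum]
    have step : ∀ t ∈ Finset.Icc 1 n,
        q * ∑ S ∈ Finset.powersetCard t (Finset.univ : Finset (Fin n)),
          (-1 : R) ^ t *
            ((1 - q ^ (t - 1) * ∏ i ∈ S, x i) * (1 - (q ^ (t - 1) * ∏ i ∈ S, x i) * q))
        = ∑ S ∈ Finset.powersetCard t (Finset.univ : Finset (Fin n)),
            (-1 : R) ^ S.card * (q - (1 + q) * (q ^ S.card * ∏ i ∈ S, x i)
              + (q ^ S.card * ∏ i ∈ S, x i) ^ 2) := by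
      intro t ht
      have ht' := Finset.mem_Icc.mp ht
      rw [Finset.mul_sum]
      refine Finset.sum_congr rfl fun S hS => ?_
      have hc : S.card = t := (Finset.mem_powersetCard.mp hS).2
      obtain ⟨s, rfl⟩ : ∃ s, t = s + 1 := ⟨t - 1, by omega⟩
      rw [hc]
      simp only [Nat.add_sub_cancel]
      ring
    rw [Finset.sum_congr rfl step]
    have hzero : ∑ S ∈ Finset.powersetCard 0 (Finset.univ : Finset (Fin n)),
        (-1 : R) ^ S.card * (q - (1 + q) * (q ^ S.card * ∏ i ∈ S, x i)
          + (q ^ S.card * ∏ i ∈ S, x i) ^ 2) = 0 := by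
      rw [Finset.powersetCard_zero, Finset.sum_singleton]
      simp only [Finset.card_empty, pow_zero, Finset.prod_empty, one_mul, mul_one]
      ring
    have hext : ∑ t ∈ Finset.Icc 1 n,
        ∑ S ∈ Finset.powersetCard t (Finset.univ : Finset (Fin n)),
          (-1 : R) ^ S.card * (q - (1 + q) * (q ^ S.card * ∏ i ∈ S, x i)
            + (q ^ S.card * ∏ i ∈ S, x i) ^ 2)
        = ∑ t ∈ Finset.range (n + 1),
            ∑ S ∈ Finset.powersetCard t (Finset.univ : Finset (Fin n)),
              (-1 : R) ^ S.card * (q - (1 + q) * (q ^ S.card * ∏ i ∈ S, x i)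
                + (q ^ S.card * ∏ i ∈ S, x i) ^ 2) := by
      rw [hrange, Finset.sum_insert h0, hzero, zero_add]
    rw [hext, lascoux_sum_powerset_card, hH]
  have hB : q * (∑ t ∈ Finset.Icc 1 (n - 1), (q ^ t - (-1 : R) ^ t) *
        ∑ S ∈ Finset.powersetCard (t + 1) (Finset.univ : Finset (Fin n)), ∏ i ∈ S, x i)
      = T + q * P - (1 + q) := by
    have hmap : ∑ t ∈ Finset.Icc 1 (n - 1), (q ^ t - (-1 : R) ^ t) *
          ∑ S ∈ Finset.powersetCard (t + 1) (Finset.univ : Finset (Fin n)), ∏ i ∈ S, x i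
        = ∑ j ∈ Finset.Icc 2 n, (q ^ (j - 1) - (-1 : R) ^ (j - 1)) *
            ∑ S ∈ Finset.powersetCard j (Finset.univ : Finset (Fin n)), ∏ i ∈ S, x i := by
      have hIm : Finset.Icc 2 n = (Finset.Icc 1 (n - 1)).map (addRightEmbedding 1) := by
        rw [Finset.map_add_right_Icc]
        congr 1
        omega
      rw [hIm, Finset.sum_map]
      refine Finset.sum_congr rfl fun t ht => ?_
      simp only [addRightEmbedding_apply, Nat.add_sub_cancel]
    have hext : ∑ j ∈ Finset.Icc 2 n, (q ^ (j - 1) - (-1 : R) ^ (j - 1)) *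
          ∑ S ∈ Finset.powersetCard j (Finset.univ : Finset (Fin n)), ∏ i ∈ S, x i
        = ∑ j ∈ Finset.range (n + 1), (q ^ (j - 1) - (-1 : R) ^ (j - 1)) *
            ∑ S ∈ Finset.powersetCard j (Finset.univ : Finset (Fin n)), ∏ i ∈ S, x i := by
      rw [hrange, Finset.sum_insert h0, hIcc, Finset.sum_insert h1]
      norm_num
    rw [hmap, hext, Finset.mul_sum, hrange, Finset.sum_insert h0]
    have hstep : ∀ j ∈ Finset.Icc 1 n,
        q * ((q ^ (j - 1) - (-1 : R) ^ (j - 1)) *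
          ∑ S ∈ Finset.powersetCard j (Finset.univ : Finset (Fin n)), ∏ i ∈ S, x i)
        = ∑ S ∈ Finset.powersetCard j (Finset.univ : Finset (Fin n)),
            (q ^ S.card * ∏ i ∈ S, x i + q * ((-1 : R) ^ S.card * ∏ i ∈ S, x i)) := by
      intro j hj
      have hj' := Finset.mem_Icc.mp hj
      obtain ⟨s, rfl⟩ : ∃ s, j = s + 1 := ⟨j - 1, by omega⟩
      rw [Finset.mul_sum, Finset.mul_sum]
      refine Finset.sum_congr rfl fun S hS => ?_
      have hc : S.card = s + 1 := (Finset.mem_powersetCard.mp hS).2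
      rw [hc]
      simp only [Nat.add_sub_cancel]
      ring
    rw [Finset.sum_congr rfl hstep]
    have h00 : q * ((q ^ (0 - 1) - (-1 : R) ^ (0 - 1)) *
        ∑ S ∈ Finset.powersetCard 0 (Finset.univ : Finset (Fin n)), ∏ i ∈ S, x i) = 0 := by
      norm_num
    rw [h00, zero_add]
    have hfull : ∑ j ∈ Finset.range (n + 1),
        ∑ S ∈ Finset.powersetCard j (Finset.univ : Finset (Fin n)),
          (q ^ S.card * ∏ i ∈ S, x i + q * ((-1 : R) ^ S.card * ∏ i ∈ S, x i))
        = T + q * P := by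
      rw [lascoux_sum_powerset_card, Finset.sum_add_distrib, e4, ← Finset.mul_sum, e2']
    have hsplit : ∑ j ∈ Finset.range (n + 1),
        ∑ S ∈ Finset.powersetCard j (Finset.univ : Finset (Fin n)),
          (q ^ S.card * ∏ i ∈ S, x i + q * ((-1 : R) ^ S.card * ∏ i ∈ S, x i))
        = (∑ S ∈ Finset.powersetCard 0 (Finset.univ : Finset (Fin n)),
            (q ^ S.card * ∏ i ∈ S, x i + q * ((-1 : R) ^ S.card * ∏ i ∈ S, x i)))
          + ∑ j ∈ Finset.Icc 1 n,
              ∑ S ∈ Finset.powersetCard j (Finset.univ : Finset (Fin n)),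
                (q ^ S.card * ∏ i ∈ S, x i + q * ((-1 : R) ^ S.card * ∏ i ∈ S, x i)) := by
      rw [hrange, Finset.sum_insert h0]
    have h0card : ∑ S ∈ Finset.powersetCard 0 (Finset.univ : Finset (Fin n)),
        (q ^ S.card * ∏ i ∈ S, x i + q * ((-1 : R) ^ S.card * ∏ i ∈ S, x i)) = 1 + q := by
      rw [Finset.powersetCard_zero, Finset.sum_singleton]
      simp only [Finset.card_empty, pow_zero, Finset.prod_empty, one_mul, mul_one]
    have : ∑ j ∈ Finset.Icc 1 n,
        ∑ S ∈ Finset.powersetCard j (Finset.univ : Finset (Fin n)),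
          (q ^ S.card * ∏ i ∈ S, x i + q * ((-1 : R) ^ S.card * ∏ i ∈ S, x i))
        = T + q * P - (1 + q) := by
      rw [← hfull, hsplit, h0card]
      ring
    rw [this]
  linear_combination hA - Q * hB + q * hL1

private lemma lascoux_key_poly (n : ℕ) (hn : 2 ≤ n) :
    (∏ i, (1 - (MvPolynomial.X (some i) : MvPolynomial (Option (Fin n)) ℤ))
        * (1 - MvPolynomial.X (some i) * MvPolynomial.X none))
      + ∑ t ∈ Finset.Icc 1 n, ∑ S ∈ Finset.powersetCard t (Finset.univ : Finset (Fin n)),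
          (-1 : MvPolynomial (Option (Fin n)) ℤ) ^ t *
            ((1 - (MvPolynomial.X none) ^ (t - 1) * ∏ i ∈ S, MvPolynomial.X (some i)) *
              (1 - ((MvPolynomial.X none) ^ (t - 1) * ∏ i ∈ S, MvPolynomial.X (some i))
                * MvPolynomial.X none))
      = (∏ i, (1 - MvPolynomial.X none * MvPolynomial.X (some i))) *
          ∑ t ∈ Finset.Icc 1 (n - 1),
            ((MvPolynomial.X none) ^ t - (-1 : MvPolynomial (Option (Fin n)) ℤ) ^ t) *
            ∑ S ∈ Finset.powersetCard (t + 1) (Finset.univ : Finset (Fin n)),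
              ∏ i ∈ S, MvPolynomial.X (some i) :=
  mul_left_cancel₀ (MvPolynomial.X_ne_zero none)
    (lascoux_mul_key n hn (fun i => MvPolynomial.X (some i)) (MvPolynomial.X none))

/-- Lascoux's `n`-variable generalization (2.12) of the basic
polynomial identity, over an arbitrary commutative ring.  Here
`(a;q)₂ = (1-a)(1-aq)` and the `j`-th elementary symmetric polynomial is
written as a sum over subsets of cardinality `j`. -/
theorem lascoux_polynomial_identity {R : Type*} [CommRing R] (n : ℕ) (hn : 2 ≤ n)
    (x : Fin n → R) (q : R) :
    (∏ i, (1 - x i) * (1 - x i * q))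
      + ∑ t ∈ Finset.Icc 1 n, ∑ S ∈ Finset.powersetCard t (Finset.univ : Finset (Fin n)),
          (-1 : R) ^ t *
            ((1 - q ^ (t - 1) * ∏ i ∈ S, x i) * (1 - (q ^ (t - 1) * ∏ i ∈ S, x i) * q))
      = (∏ i, (1 - q * x i)) *
          ∑ t ∈ Finset.Icc 1 (n - 1), (q ^ t - (-1 : R) ^ t) *
            ∑ S ∈ Finset.powersetCard (t + 1) (Finset.univ : Finset (Fin n)), ∏ i ∈ S, x i := by
  have h := congrArg (MvPolynomial.aeval (fun o : Option (Fin n) => o.elim q x) :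
      MvPolynomial (Option (Fin n)) ℤ →ₐ[ℤ] R) (lascoux_key_poly n hn)
  simpa only [map_add, map_mul, map_sub, map_one, map_pow, map_neg, map_sum, map_prod,
    MvPolynomial.aeval_X, Option.elim_some, Option.elim_none] using h
end

section
/- For every integer a ≥ 0, every integer L ≥ 1, and every integer i, the Gaussian binomial coefficients (in the variable q) satisfy [2L+a choose L−(i−1)]_q + [2L+a choose L−(i+1)]_q + q^{2L+a}(1+q)[2L+a choose L−i]_q − (1−q^{2L+a})(1−q^{2L+a−1})[2(L−1)+a choose (L−1)−i]_q = [2(L+1)+a choose (L+1)−i]_q, as an identity of polynomials in q. -/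
open Finset

/-- The finite q-Pochhammer symbol `(a;p)_n = ∏_{j=0}^{n-1} (1 - a pʲ)`. -/
noncomputable def qp (a p : ℂ) (n : ℕ) : ℂ := ∏ j ∈ Finset.range n, (1 - a * p ^ j)

/-- The Gaussian binomial coefficient `[N choose k]_p`, equal to
`(p;p)_N / ((p;p)_k (p;p)_{N-k})` when `0 ≤ k ≤ N` and `0` otherwise. -/
noncomputable def gb (p : ℂ) (N k : ℤ) : ℂ :=
  if 0 ≤ k ∧ k ≤ N then qp p p N.toNat / (qp p p k.toNat * qp p p (N - k).toNat) else 0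

lemma qp_succ (q : ℂ) (n : ℕ) : qp q q (n+1) = qp q q n * (1 - q ^ (n+1)) := by
  rw [qp, qp, Finset.prod_range_succ, pow_succ']

lemma qp_zero (q : ℂ) : qp q q 0 = 1 := by simp [qp]

lemma one_sub_ne (q : ℂ) (hq : ∀ n : ℕ, 0 < n → q ^ n ≠ 1) (n : ℕ) (hn : 0 < n) :
    (1 : ℂ) - q ^ n ≠ 0 :=
  sub_ne_zero.mpr (Ne.symm (hq n hn))

lemma qp_ne (q : ℂ) (hq : ∀ n : ℕ, 0 < n → q ^ n ≠ 1) (n : ℕ) : qp q q n ≠ 0 := by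
  induction n with
  | zero => simp [qp_zero]
  | succ m ih => rw [qp_succ]; exact mul_ne_zero ih (one_sub_ne q hq (m+1) (Nat.succ_pos m))

lemma gb_nat (q : ℂ) (N k : ℕ) (h : k ≤ N) :
    gb q (N : ℤ) (k : ℤ) = qp q q N / (qp q q k * qp q q (N - k)) := by
  have h2 : ((N:ℤ) - (k:ℤ)).toNat = N - k := by omega
  rw [gb, if_pos ⟨Int.natCast_nonneg k, by exact_mod_cast h⟩, Int.toNat_natCast,
    Int.toNat_natCast, h2]

lemma gb_of_neg (q : ℂ) (N k : ℤ) (h : k < 0) : gb q N k = 0 := by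
  rw [gb, if_neg]; omega

lemma gb_of_gt (q : ℂ) (N k : ℤ) (h : N < k) : gb q N k = 0 := by
  rw [gb, if_neg]; omega

lemma qp_one (q : ℂ) : qp q q 1 = 1 - q := by simp [qp]

lemma gb_left (q : ℂ) (hq : ∀ n : ℕ, 0 < n → q ^ n ≠ 1) (N : ℕ) :
    gb q (N : ℤ) 0 = 1 := by
  rw [show (0:ℤ) = ((0:ℕ):ℤ) from rfl, gb_nat q N 0 (Nat.zero_le N), qp_zero,
    Nat.sub_zero, one_mul, div_self (qp_ne q hq N)]

lemma gb_right (q : ℂ) (hq : ∀ n : ℕ, 0 < n → q ^ n ≠ 1) (N : ℕ) :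
    gb q (N : ℤ) (N : ℤ) = 1 := by
  rw [gb_nat q N N le_rfl, Nat.sub_self, qp_zero, mul_one, div_self (qp_ne q hq N)]

lemma gb_one (q : ℂ) (hq : ∀ n : ℕ, 0 < n → q ^ n ≠ 1) (M : ℕ) (hM : 1 ≤ M) :
    gb q (M : ℤ) 1 = (1 - q ^ M) / (1 - q) := by
  obtain ⟨M0, rfl⟩ : ∃ M0, M = M0 + 1 := ⟨M - 1, by omega⟩
  have h1 := gb_nat q (M0 + 1) 1 (by omega)
  rw [show ((1:ℕ):ℤ) = 1 from rfl] at h1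
  rw [h1, show M0 + 1 - 1 = M0 from rfl, qp_one, qp_succ]
  have hC := qp_ne q hq M0
  have h2 : (1:ℂ) - q ≠ 0 := by simpa using one_sub_ne q hq 1 one_pos
  field_simp

lemma gb_last (q : ℂ) (hq : ∀ n : ℕ, 0 < n → q ^ n ≠ 1) (M : ℕ) (hM : 1 ≤ M) :
    gb q (M : ℤ) ((M : ℤ) - 1) = (1 - q ^ M) / (1 - q) := by
  obtain ⟨M0, rfl⟩ : ∃ M0, M = M0 + 1 := ⟨M - 1, by omega⟩
  have h1 := gb_nat q (M0 + 1) M0 (by omega)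
  rw [show ((M0+1:ℕ):ℤ) - 1 = (M0:ℤ) from by push_cast; ring, h1,
    show M0 + 1 - M0 = 1 from by omega, qp_one, qp_succ]
  have hC := qp_ne q hq M0
  have h2 : (1:ℂ) - q ≠ 0 := by simpa using one_sub_ne q hq 1 one_pos
  field_simp

set_option maxHeartbeats 1000000 in
lemma gb_main (q : ℂ) (hq : ∀ n : ℕ, 0 < n → q ^ n ≠ 1) (k' m' : ℕ) :
    gb q ((k':ℤ) + m' + 2) ((k':ℤ) + 2) + gb q ((k':ℤ) + m' + 2) (k':ℤ)
      + q ^ (k' + m' + 2) * (1 + q) * gb q ((k':ℤ) + m' + 2) ((k':ℤ) + 1)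
      - (1 - q ^ (k' + m' + 2)) * (1 - q ^ (k' + m' + 1)) * gb q ((k':ℤ) + m') (k':ℤ)
      = gb q ((k':ℤ) + m' + 4) ((k':ℤ) + 2) := by
  have c1 : (k':ℤ) + m' + 2 = ((k' + m' + 2 : ℕ) : ℤ) := by omega
  have c2 : (k':ℤ) + 2 = ((k' + 2 : ℕ) : ℤ) := by omega
  have c3 : (k':ℤ) + 1 = ((k' + 1 : ℕ) : ℤ) := by omega
  have c4 : (k':ℤ) + m' = ((k' + m' : ℕ) : ℤ) := by omega
  have c5 : (k':ℤ) + m' + 4 = ((k' + m' + 4 : ℕ) : ℤ) := by omega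
  rw [c1, c2, c3, c5, c4,
    gb_nat q _ _ (by omega), gb_nat q _ _ (by omega), gb_nat q _ _ (by omega),
    gb_nat q _ _ (by omega), gb_nat q _ _ (by omega),
    show k' + m' + 2 - (k' + 2) = m' from by omega,
    show k' + m' + 2 - k' = m' + 2 from by omega,
    show k' + m' + 2 - (k' + 1) = m' + 1 from by omega,
    show k' + m' - k' = m' from by omega,
    show k' + m' + 4 - (k' + 2) = m' + 2 from by omega]
  have hk2 : qp q q (k' + 2) = qp q q k' * (1 - q ^ (k'+1)) * (1 - q ^ (k'+2)) := by
    rw [show k' + 2 = (k' + 1) + 1 from rfl, qp_succ, qp_succ]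
  have hk1 : qp q q (k' + 1) = qp q q k' * (1 - q ^ (k'+1)) := qp_succ q k'
  have hm2 : qp q q (m' + 2) = qp q q m' * (1 - q ^ (m'+1)) * (1 - q ^ (m'+2)) := by
    rw [show m' + 2 = (m' + 1) + 1 from rfl, qp_succ, qp_succ]
  have hm1 : qp q q (m' + 1) = qp q q m' * (1 - q ^ (m'+1)) := qp_succ q m'
  have hN2 : qp q q (k' + m' + 2) =
      qp q q (k' + m') * (1 - q ^ (k'+m'+1)) * (1 - q ^ (k'+m'+2)) := by
    rw [show k' + m' + 2 = (k' + m' + 1) + 1 from rfl, qp_succ, qp_succ]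
  have hN4 : qp q q (k' + m' + 4) =
      qp q q (k' + m') * (1 - q ^ (k'+m'+1)) * (1 - q ^ (k'+m'+2))
        * (1 - q ^ (k'+m'+3)) * (1 - q ^ (k'+m'+4)) := by
    rw [show k' + m' + 4 = (k' + m' + 3) + 1 from rfl, qp_succ,
      show k' + m' + 3 = (k' + m' + 2) + 1 from rfl, qp_succ,
      show k' + m' + 2 = (k' + m' + 1) + 1 from rfl, qp_succ, qp_succ]
  have hA := qp_ne q hq (k' + m')
  have hB := qp_ne q hq k'
  have hC := qp_ne q hq m'
  have f1 := one_sub_ne q hq (k'+1) (by omega)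
  have f2 := one_sub_ne q hq (k'+2) (by omega)
  have f3 := one_sub_ne q hq (m'+1) (by omega)
  have f4 := one_sub_ne q hq (m'+2) (by omega)
  have f5 := one_sub_ne q hq (k'+m'+1) (by omega)
  have f6 := one_sub_ne q hq (k'+m'+2) (by omega)
  set A := qp q q (k' + m') with hAdef
  set B := qp q q k' with hBdef
  set C := qp q q m' with hCdef
  set g1 := (1:ℂ) - q ^ (k'+1) with hg1
  set g2 := (1:ℂ) - q ^ (k'+2) with hg2
  set g3 := (1:ℂ) - q ^ (m'+1) with hg3
  set g4 := (1:ℂ) - q ^ (m'+2) with hg4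
  set g5 := (1:ℂ) - q ^ (k'+m'+1) with hg5
  set g6 := (1:ℂ) - q ^ (k'+m'+2) with hg6
  have hD : B * C * g1 * g2 * g3 * g4 ≠ 0 := by
    exact mul_ne_zero (mul_ne_zero (mul_ne_zero (mul_ne_zero (mul_ne_zero hB hC) f1) f2) f3) f4
  have t1 : qp q q (k'+m'+2) / (qp q q (k'+2) * C) =
      A * g5 * g6 * (g3 * g4) / (B * C * g1 * g2 * g3 * g4) := by
    rw [hN2, hk2, div_eq_div_iff (by exact mul_ne_zero (mul_ne_zero (mul_ne_zero hB f1) f2) hC) hD]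
    ring
  have t2 : qp q q (k'+m'+2) / (B * qp q q (m'+2)) =
      A * g5 * g6 * (g1 * g2) / (B * C * g1 * g2 * g3 * g4) := by
    rw [hN2, hm2, div_eq_div_iff (by exact mul_ne_zero hB (mul_ne_zero (mul_ne_zero hC f3) f4)) hD]
    ring
  have t3 : qp q q (k'+m'+2) / (qp q q (k'+1) * qp q q (m'+1)) =
      A * g5 * g6 * (g2 * g4) / (B * C * g1 * g2 * g3 * g4) := by
    rw [hN2, hk1, hm1, div_eq_div_iff (by exact mul_ne_zero (mul_ne_zero hB f1) (mul_ne_zero hC f3)) hD]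
    ring
  have t4 : A / (B * C) =
      A * (g1 * g2 * g3 * g4) / (B * C * g1 * g2 * g3 * g4) := by
    rw [div_eq_div_iff (mul_ne_zero hB hC) hD]
    ring
  have t5 : qp q q (k'+m'+4) / (qp q q (k'+2) * qp q q (m'+2)) =
      A * g5 * g6 * ((1 - q ^ (k'+m'+3)) * (1 - q ^ (k'+m'+4))) / (B * C * g1 * g2 * g3 * g4) := by
    have hd5 : B * g1 * g2 * (C * g3 * g4) ≠ 0 :=
      mul_ne_zero (mul_ne_zero (mul_ne_zero hB f1) f2) (mul_ne_zero (mul_ne_zero hC f3) f4)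
    rw [hN4, hk2, hm2, div_eq_div_iff hd5 hD]
    ring
  rw [t1, t2, t3, t4, t5, ← mul_div_assoc, ← mul_div_assoc, ← add_div,
    ← add_div, ← sub_div, div_eq_div_iff hD hD]
  simp only [hg1, hg2, hg3, hg4, hg5, hg6]
  ring

lemma rec_int (q : ℂ) (hq : ∀ n : ℕ, 0 < n → q ^ n ≠ 1) (n : ℕ) (hn : 2 ≤ n) (k : ℤ) :
    gb q (n:ℤ) (k+1) + gb q (n:ℤ) (k-1) + q^n*(1+q)*gb q (n:ℤ) k
      - (1-q^n)*(1-q^(n-1))*gb q ((n:ℤ)-2) (k-1) = gb q ((n:ℤ)+2) (k+1) := by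
  have h2 : (1:ℂ) - q ≠ 0 := by simpa using one_sub_ne q hq 1 one_pos
  rcases lt_or_ge k (-1) with h | h
  · rw [gb_of_neg _ _ _ (by omega), gb_of_neg _ _ _ (by omega), gb_of_neg _ _ _ (by omega),
      gb_of_neg _ _ _ (by omega), gb_of_neg _ _ _ (by omega)]
    ring
  by_cases hm1 : k = -1
  · rw [hm1, show (-1:ℤ)+1 = 0 from rfl, show (-1:ℤ)-1 = -2 from rfl,
      gb_of_neg q (n:ℤ) (-2) (by omega), gb_of_neg q (n:ℤ) (-1) (by omega),
      gb_of_neg q ((n:ℤ)-2) (-2) (by omega),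
      gb_left q hq n, show (n:ℤ)+2 = ((n+2:ℕ):ℤ) from by push_cast; ring, gb_left q hq (n+2)]
    ring
  by_cases h0 : k = 0
  · rw [h0, show (0:ℤ)+1 = 1 from rfl, show (0:ℤ)-1 = -1 from rfl,
      gb_of_neg q (n:ℤ) (-1) (by omega), gb_of_neg q ((n:ℤ)-2) (-1) (by omega),
      gb_left q hq n, gb_one q hq n (by omega),
      show (n:ℤ)+2 = ((n+2:ℕ):ℤ) from by push_cast; ring, gb_one q hq (n+2) (by omega)]
    field_simp
    ring
  by_cases hn0 : k = (n:ℤ)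
  · rw [hn0, gb_of_gt q (n:ℤ) ((n:ℤ)+1) (by omega), gb_last q hq n (by omega), gb_right q hq n,
      gb_of_gt q ((n:ℤ)-2) ((n:ℤ)-1) (by omega),
      show (n:ℤ)+1 = ((n+2:ℕ):ℤ)-1 from by push_cast; ring,
      show (n:ℤ)+2 = ((n+2:ℕ):ℤ) from by push_cast; ring,
      gb_last q hq (n+2) (by omega)]
    field_simp
    ring
  by_cases hn1 : k = (n:ℤ)+1
  · rw [hn1, show (n:ℤ)+1-1 = (n:ℤ) from by ring,
      show (n:ℤ)+1+1 = ((n+2:ℕ):ℤ) from by push_cast; ring,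
      show (n:ℤ)+2 = ((n+2:ℕ):ℤ) from by push_cast; ring,
      gb_of_gt q (n:ℤ) (((n+2:ℕ):ℤ)) (by omega), gb_right q hq n,
      gb_of_gt q (n:ℤ) ((n:ℤ)+1) (by omega),
      gb_of_gt q ((n:ℤ)-2) (n:ℤ) (by omega), gb_right q hq (n+2)]
    ring
  by_cases hbig : (n:ℤ)+1 < k
  · rw [gb_of_gt q (n:ℤ) (k+1) (by omega), gb_of_gt q (n:ℤ) (k-1) (by omega),
      gb_of_gt q (n:ℤ) k (by omega), gb_of_gt q ((n:ℤ)-2) (k-1) (by omega),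
      gb_of_gt q ((n:ℤ)+2) (k+1) (by omega)]
    ring
  · obtain ⟨k', rfl⟩ : ∃ k' : ℕ, k = (k':ℤ)+1 := ⟨(k-1).toNat, by omega⟩
    obtain ⟨m', rfl⟩ : ∃ m' : ℕ, n = k'+m'+2 := ⟨n - k' - 2, by omega⟩
    rw [show ((k'+m'+2:ℕ):ℤ) = (k':ℤ)+m'+2 from by push_cast; ring,
        show ((k':ℤ)+1)+1 = (k':ℤ)+2 from by ring,
        show ((k':ℤ)+1)-1 = (k':ℤ) from by ring,
        show (k':ℤ)+↑m'+2-2 = (k':ℤ)+m' from by ring,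
        show (k':ℤ)+↑m'+2+2 = (k':ℤ)+m'+4 from by ring,
        show k'+m'+2-1 = k'+m'+1 from by omega]
    exact gb_main q hq k' m'

/-- the recurrence (2.3) for Gaussian binomial coefficients.
The identity of polynomials in `q` is expressed as an identity of complex
numbers for every `q` that is not a root of unity (so that all the defining
quotients make sense). -/
theorem gaussian_binomial_recurrence (a L : ℕ) (hL : 1 ≤ L) (i : ℤ)
    (q : ℂ) (hq : ∀ n : ℕ, 0 < n → q ^ n ≠ 1) :
    gb q (2 * L + a) ((L : ℤ) - (i - 1)) + gb q (2 * L + a) ((L : ℤ) - (i + 1))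
      + q ^ (2 * L + a) * (1 + q) * gb q (2 * L + a) ((L : ℤ) - i)
      - (1 - q ^ (2 * L + a)) * (1 - q ^ (2 * L + a - 1)) *
          gb q (2 * ((L : ℤ) - 1) + a) (((L : ℤ) - 1) - i)
      = gb q (2 * ((L : ℤ) + 1) + a) (((L : ℤ) + 1) - i) := by
  rw [show (L:ℤ)-(i-1) = ((L:ℤ)-i)+1 from by ring,
      show (L:ℤ)-(i+1) = ((L:ℤ)-i)-1 from by ring,
      show ((L:ℤ)-1)-i = ((L:ℤ)-i)-1 from by ring,
      show ((L:ℤ)+1)-i = ((L:ℤ)-i)+1 from by ring,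
      show 2*((L:ℤ)-1)+(a:ℤ) = ((2*L+a:ℕ):ℤ)-2 from by push_cast; ring,
      show 2*((L:ℤ)+1)+(a:ℤ) = ((2*L+a:ℕ):ℤ)+2 from by push_cast; ring,
      show 2*(L:ℤ)+(a:ℤ) = ((2*L+a:ℕ):ℤ) from by push_cast; ring]
  exact rec_int q hq (2*L+a) (by omega) ((L:ℤ)-i)
end

section
/- For all integers L, M ≥ 0, ∑_{i,j∈ℤ} (−1)^{i+j} q^{C(i+j,2)} [2L choose L−i]_q [2M choose M−j]_q = (q;q)_{2L} · δ_{L,M}, where δ_{L,M} is the Kronecker delta; the sum has only finitely many nonzero terms and the identity holds as an identity of polynomials in q. -/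
open Finset

namespace DSKD

/-- sign -/
noncomputable def ε (k : ℤ) : ℂ := if Even k then 1 else -1

/-- C(k,2) as a natural number -/
def c2 (k : ℤ) : ℕ := (k * (k - 1) / 2).toNat

/-- shifted pochhammer ∏_{j<n} (1 - q^(m+j)) -/
noncomputable def qq (q : ℂ) (m n : ℕ) : ℂ := ∏ j ∈ Finset.range n, (1 - q ^ (m + j))

noncomputable def gbn (q : ℂ) (n k : ℕ) : ℂ :=
  if k ≤ n then qp q q n / (qp q q k * qp q q (n - k)) else 0

noncomputable def Hh (q : ℂ) (n : ℕ) (a : ℤ) : ℂ :=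
  ∑ t ∈ range (n + 1), ε (a + t) * q ^ c2 (a - t) * gbn q n t

lemma eps_even {k : ℤ} (h : Even k) : ε k = 1 := if_pos h
lemma eps_odd {k : ℤ} (h : ¬ Even k) : ε k = -1 := if_neg h

lemma eps_congr {k l : ℤ} (h : (2:ℤ) ∣ (k - l)) : ε k = ε l := by
  unfold ε
  rcases h with ⟨d, hd⟩
  have : Even k ↔ Even l := by
    rw [Int.even_iff, Int.even_iff]; omega
  simp [this]

lemma eps_neg (k : ℤ) : ε (-k) = ε k := eps_congr (by omega)

lemma eps_natCast (n : ℕ) : ε (n : ℤ) = (-1 : ℂ) ^ n := by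
  unfold ε
  by_cases h : Even n
  · rw [if_pos (by exact_mod_cast h), h.neg_one_pow]
  · rw [if_neg (by exact_mod_cast h), (Nat.odd_iff.2 (Nat.not_even_iff.1 h)).neg_one_pow]

lemma eps_zpow (k : ℤ) : (-1 : ℂ) ^ k = ε k := by
  rcases Int.even_or_odd k with h | h
  · rw [h.neg_one_zpow, eps_even h]
  · rw [h.neg_one_zpow, eps_odd (Int.not_even_iff_odd.2 h)]

lemma eps_succ (k : ℤ) : ε (k + 1) = -ε k := by
  unfold ε
  by_cases h : Even k
  · rw [if_pos h, if_neg (by simp [Int.even_add_one, h])]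
  · rw [if_neg h, if_pos (Int.even_add_one.2 h)]; ring

lemma consec_nonneg (k : ℤ) : 0 ≤ k * (k - 1) := by
  rcases le_or_gt 1 k with h | h
  · exact mul_nonneg (by omega) (by omega)
  · exact mul_nonneg_iff.2 (Or.inr ⟨by omega, by omega⟩)

lemma consec_even (k : ℤ) : ∃ d : ℤ, 0 ≤ d ∧ k * (k - 1) = 2 * d := by
  have h : Even (k * (k - 1)) := by
    rw [show k*(k-1) = (k-1)*((k-1)+1) by ring]; exact Int.even_mul_succ_self _
  rcases h with ⟨d, hd⟩
  exact ⟨d, by nlinarith [consec_nonneg k], by omega⟩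

lemma c2_cast (k : ℤ) : (c2 k : ℤ) * 2 = k * (k - 1) := by
  obtain ⟨d, hd0, hd⟩ := consec_even k
  unfold c2
  rw [hd]
  omega

/-- key step relation: C(k,2) = C(k-1,2) + (k-1) as integers -/
lemma c2_step (k : ℤ) : (c2 k : ℤ) = c2 (k - 1) + (k - 1) := by
  have h1 := c2_cast k
  have h2 := c2_cast (k - 1)
  nlinarith [h1, h2]

lemma c2_reflect (k : ℤ) : c2 k = c2 (1 - k) := by
  have h1 := c2_cast k
  have h2 := c2_cast (1 - k)
  nlinarith [h1, h2]

variable {q : ℂ}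

lemma qp_succ (n : ℕ) : qp q q (n+1) = qp q q n * (1 - q ^ (n+1)) := by
  unfold qp; rw [prod_range_succ, pow_succ']

lemma one_sub_pow_ne (hq : ∀ n : ℕ, 0 < n → q ^ n ≠ 1) {k : ℕ} (hk : 0 < k) :
    (1 - q ^ k) ≠ 0 :=
  sub_ne_zero.2 fun h => hq k hk h.symm

lemma qp_ne (hq : ∀ n : ℕ, 0 < n → q ^ n ≠ 1) (n : ℕ) : qp q q n ≠ 0 := by
  unfold qp
  rw [Finset.prod_ne_zero_iff]
  intro j _
  rw [← pow_succ']
  exact one_sub_pow_ne hq (Nat.succ_pos j)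

lemma qq_zero (m : ℕ) : qq q m 0 = 1 := by simp [qq]

lemma qq_succ (m n : ℕ) : qq q m (n+1) = qq q m n * (1 - q ^ (m + n)) := by
  unfold qq; rw [prod_range_succ]

lemma qq_succ' (m n : ℕ) : qq q m (n+1) = (1 - q ^ m) * qq q (m+1) n := by
  unfold qq
  rw [prod_range_succ', add_zero, mul_comm]
  congr 1
  exact prod_congr rfl fun j _ => by rw [show m + (j + 1) = m + 1 + j by omega]

lemma qq_one (n : ℕ) : qq q 1 n = qp q q n := by
  unfold qq qp
  refine prod_congr rfl fun j _ => ?_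
  rw [← pow_succ', Nat.add_comm]

lemma qp_mul_qq (a b : ℕ) : qp q q a * qq q (a+1) b = qp q q (a+b) := by
  induction b with
  | zero => simp [qq_zero]
  | succ b ih =>
      rw [qq_succ, ← mul_assoc, ih, ← Nat.add_assoc, qp_succ,
        show a + 1 + b = a + b + 1 by omega]

lemma qq_cross (m k : ℕ) : (1 - q ^ m) * qq q (m+1) k = qq q m k * (1 - q ^ (m + k)) := by
  rw [← qq_succ', qq_succ]

lemma gbn_eq {n k : ℕ} (h : k ≤ n) : gbn q n k = qp q q n / (qp q q k * qp q q (n - k)) :=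
  if_pos h

lemma gbn_overflow {n k : ℕ} (h : n < k) : gbn q n k = 0 := if_neg (by omega)

lemma qp_zero : qp q q 0 = 1 := by simp [qp]

lemma gbn_zero_right (hq : ∀ n : ℕ, 0 < n → q ^ n ≠ 1) (n : ℕ) : gbn q n 0 = 1 := by
  rw [gbn_eq (Nat.zero_le n), qp_zero, Nat.sub_zero, one_mul]
  exact div_self (qp_ne hq n)

lemma gbn_self (hq : ∀ n : ℕ, 0 < n → q ^ n ≠ 1) (n : ℕ) : gbn q n n = 1 := by
  rw [gbn_eq le_rfl, Nat.sub_self, qp_zero, mul_one]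
  exact div_self (qp_ne hq n)

lemma gbn_symm {n k : ℕ} (h : k ≤ n) : gbn q n (n - k) = gbn q n k := by
  rw [gbn_eq (Nat.sub_le n k), gbn_eq h, Nat.sub_sub_self h, mul_comm]

lemma pascal1 (hq : ∀ n : ℕ, 0 < n → q ^ n ≠ 1) (n k : ℕ) :
    gbn q (n+1) (k+1) = gbn q n k + q ^ (k+1) * gbn q n (k+1) := by
  rcases lt_or_ge n k with h | h
  · rw [gbn_overflow (by omega), gbn_overflow h, gbn_overflow (by omega)]; ring
  rcases eq_or_lt_of_le h with rfl | h
  · rw [gbn_self hq, gbn_self hq, gbn_overflow (by omega)]; ring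
  · rw [gbn_eq (by omega), gbn_eq (by omega), gbn_eq (by omega)]
    have e1 : n + 1 - (k + 1) = n - k := by omega
    have e2 : n - k = (n - k - 1) + 1 := by omega
    have e3 : n - (k + 1) = n - k - 1 := by omega
    rw [e1, e3, qp_succ n]
    have h2 := qp_ne hq k
    have h3 := qp_ne hq (n - k)
    have h4 := qp_ne hq (n - k - 1)
    have hk1 : qp q q (k+1) = qp q q k * (1 - q^(k+1)) := qp_succ k
    have hnk : qp q q (n-k) = qp q q (n-k-1) * (1 - q^(n-k)) := by
      rw [e2, qp_succ, ← e2]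
    rw [show q^(n+1) = q^(k+1) * q^(n-k) from by
      rw [← pow_add]; congr 1; omega]
    rw [hk1, hnk]
    have hne1 : (1:ℂ) - q^(k+1) ≠ 0 := one_sub_pow_ne hq (by omega)
    have hne2 : (1:ℂ) - q^(n-k) ≠ 0 := one_sub_pow_ne hq (by omega)
    field_simp
    ring

lemma pascal2 (hq : ∀ n : ℕ, 0 < n → q ^ n ≠ 1) (n k : ℕ) (hkn : k ≤ n) :
    gbn q (n+1) (k+1) = gbn q n (k+1) + q ^ (n-k) * gbn q n k := by
  rcases eq_or_lt_of_le hkn with rfl | h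
  · rw [gbn_self hq, gbn_overflow (by omega), gbn_self hq, Nat.sub_self]; ring
  · rw [gbn_eq (by omega), gbn_eq (by omega), gbn_eq (by omega)]
    have e1 : n + 1 - (k + 1) = n - k := by omega
    have e2 : n - k = (n - k - 1) + 1 := by omega
    have e3 : n - (k + 1) = n - k - 1 := by omega
    rw [e1, e3, qp_succ n]
    have h2 := qp_ne hq k
    have h3 := qp_ne hq (n - k)
    have h4 := qp_ne hq (n - k - 1)
    have h5 := qp_ne hq (k+1)
    have hk1 : qp q q (k+1) = qp q q k * (1 - q^(k+1)) := qp_succ k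
    have hnk : qp q q (n-k) = qp q q (n-k-1) * (1 - q^(n-k)) := by
      rw [e2, qp_succ, ← e2]
    rw [show q^(n+1) = q^(k+1) * q^(n-k) from by
      rw [← pow_add]; congr 1; omega]
    rw [hk1, hnk]
    have hne1 : (1:ℂ) - q^(k+1) ≠ 0 := one_sub_pow_ne hq (by omega)
    have hne2 : (1:ℂ) - q^(n-k) ≠ 0 := one_sub_pow_ne hq (by omega)
    field_simp
    ring



section
variable {q : ℂ}

lemma sum_shift (f : ℕ → ℂ) (n : ℕ) (hf : f (n+1) = 0) :
    ∑ t ∈ range (n+1), f (t+1) = ∑ s ∈ range (n+1), f s - f 0 := by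
  have h1 := Finset.sum_range_succ' f (n+1)
  have h2 := Finset.sum_range_succ f (n+1)
  rw [h2, hf] at h1
  linear_combination -h1

lemma H_base (hq : ∀ n : ℕ, 0 < n → q ^ n ≠ 1) (a : ℤ) :
    Hh q 0 a = ε a * q ^ c2 a := by
  unfold Hh
  rw [Finset.sum_range_one, gbn_zero_right hq]
  push_cast
  rw [add_zero, sub_zero, mul_one]

lemma H_rec1 (hq : ∀ n : ℕ, 0 < n → q ^ n ≠ 1) (n : ℕ) (a : ℤ) (ha : 1 ≤ a) :
    Hh q (n+1) a = (1 - q ^ (a-1).toNat) * Hh q n (a-1) := by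
  set f : ℕ → ℂ := fun s => ε (a - 1 + (s:ℤ)) * q ^ c2 (a - 1 - (s:ℤ)) * gbn q n s with hf
  have hfn : f (n+1) = 0 := by rw [hf]; simp only; rw [gbn_overflow (by omega), mul_zero]
  have e0 : ∀ t ∈ range (n+1),
      ε (a + ((t+1 : ℕ):ℤ)) * q ^ c2 (a - ((t+1 : ℕ):ℤ)) * gbn q (n+1) (t+1)
      = f t - q ^ (a-1).toNat * f (t+1) := by
    intro t _
    rw [hf]
    simp only
    push_cast
    rw [pascal1 hq n t]
    have hε1 : ε (a + ((t:ℤ)+1)) = ε (a - 1 + t) := eps_congr (by omega)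
    have hε2 : ε (a + ((t:ℤ)+1)) = -ε (a - 1 + ((t:ℤ)+1)) := by
      rw [show a - 1 + ((t:ℤ)+1) = a + t by ring, show a + ((t:ℤ)+1) = (a + t) + 1 by ring,
        eps_succ]
    have harg1 : a - ((t:ℤ)+1) = a - 1 - t := by ring
    have hexp : c2 (a - 1 - (t:ℤ)) + (t+1) = (a-1).toNat + c2 (a - 1 - ((t:ℤ)+1)) := by
      have h1 := c2_step (a - 1 - (t:ℤ))
      have h2 : a - 1 - (t:ℤ) - 1 = a - 1 - ((t:ℤ)+1) := by ring
      rw [h2] at h1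
      omega
    have hpow : q ^ c2 (a - 1 - (t:ℤ)) * q ^ (t+1)
        = q ^ (a-1).toNat * q ^ c2 (a - 1 - ((t:ℤ)+1)) := by
      rw [← pow_add, ← pow_add, hexp]
    rw [harg1]
    linear_combination (q ^ c2 (a - 1 - (t:ℤ)) * gbn q n t) * hε1
      + (q ^ c2 (a - 1 - (t:ℤ)) * q^(t+1) * gbn q n (t+1)) * hε2
      + (-(ε (a - 1 + ((t:ℤ)+1)) * gbn q n (t+1))) * hpow
  unfold Hh
  rw [Finset.sum_range_succ', Finset.sum_congr rfl e0, Finset.sum_sub_distrib,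
    ← Finset.mul_sum, sum_shift f n hfn]
  have hεa : ε (a - 1) = -ε a := by
    have h := eps_succ (a-1)
    rw [show a - 1 + 1 = a by ring] at h
    linear_combination h
  have hc2 : c2 a = (a-1).toNat + c2 (a-1) := by
    have := c2_step a
    omega
  have hfo : ε (a + ((0:ℕ):ℤ)) * q ^ c2 (a - ((0:ℕ):ℤ)) * gbn q (n+1) 0 = ε a * q ^ c2 a := by
    rw [gbn_zero_right hq]
    push_cast
    rw [add_zero, sub_zero, mul_one]
  rw [hfo, hc2, pow_add]
  have hf0 : f 0 = ε (a-1) * q ^ c2 (a-1) := by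
    rw [hf]; simp only; push_cast
    rw [add_zero, sub_zero, gbn_zero_right hq, mul_one]
  rw [hf0, hεa]
  have hsum : ∑ s ∈ range (n+1), f s
      = ∑ t ∈ range (n+1), ε (a - 1 + (t:ℤ)) * q ^ c2 (a - 1 - (t:ℤ)) * gbn q n t := rfl
  rw [hsum]
  ring

lemma H_rec2 (hq : ∀ n : ℕ, 0 < n → q ^ n ≠ 1) (n : ℕ) (a : ℤ) (ha : a ≤ 0) :
    Hh q (n+1) a = (1 - q ^ ((n:ℤ)+1-a).toNat) * Hh q n a := by
  set f : ℕ → ℂ := fun s => ε (a + (s:ℤ)) * q ^ c2 (a - (s:ℤ)) * gbn q n s with hf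
  have hfn : f (n+1) = 0 := by rw [hf]; simp only; rw [gbn_overflow (by omega), mul_zero]
  have e0 : ∀ t ∈ range (n+1),
      ε (a + ((t+1 : ℕ):ℤ)) * q ^ c2 (a - ((t+1 : ℕ):ℤ)) * gbn q (n+1) (t+1)
      = f (t+1) - q ^ ((n:ℤ)+1-a).toNat * f t := by
    intro t ht
    have htn : t ≤ n := by simp at ht; omega
    rw [hf]
    simp only
    push_cast
    rw [pascal2 hq n t htn]
    have hε2 : ε (a + ((t:ℤ)+1)) = -ε (a + t) := by
      rw [show a + ((t:ℤ)+1) = (a + t) + 1 by ring, eps_succ]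
    have hexp : c2 (a - ((t:ℤ)+1)) + (n - t) = ((n:ℤ)+1-a).toNat + c2 (a - t) := by
      have h1 := c2_step (a - (t:ℤ))
      have h2 : a - (t:ℤ) - 1 = a - ((t:ℤ)+1) := by ring
      rw [h2] at h1
      omega
    have hpow : q ^ c2 (a - ((t:ℤ)+1)) * q ^ (n - t)
        = q ^ ((n:ℤ)+1-a).toNat * q ^ c2 (a - t) := by
      rw [← pow_add, ← pow_add, hexp]
    linear_combination (q ^ c2 (a - ((t:ℤ)+1)) * q^(n-t) * gbn q n t) * hε2
      + (-(ε (a + (t:ℤ)) * gbn q n t)) * hpow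
  unfold Hh
  rw [Finset.sum_range_succ', Finset.sum_congr rfl e0, Finset.sum_sub_distrib,
    ← Finset.mul_sum, sum_shift f n hfn]
  have hfo : ε (a + ((0:ℕ):ℤ)) * q ^ c2 (a - ((0:ℕ):ℤ)) * gbn q (n+1) 0 = ε a * q ^ c2 a := by
    rw [gbn_zero_right hq]
    push_cast
    rw [add_zero, sub_zero, mul_one]
  have hf0 : f 0 = ε a * q ^ c2 a := by
    rw [hf]; simp only; push_cast
    rw [add_zero, sub_zero, gbn_zero_right hq, mul_one]
  rw [hfo, hf0]
  have hsum : ∑ s ∈ range (n+1), f s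
      = ∑ t ∈ range (n+1), ε (a + (t:ℤ)) * q ^ c2 (a - (t:ℤ)) * gbn q n t := rfl
  rw [hsum]
  ring

lemma H_zero (hq : ∀ n : ℕ, 0 < n → q ^ n ≠ 1) (n : ℕ) (a : ℤ)
    (h1 : 1 ≤ a) (h2 : a ≤ n) : Hh q n a = 0 := by
  induction n generalizing a with
  | zero => omega
  | succ n ih =>
      rw [H_rec1 hq n a h1]
      rcases eq_or_lt_of_le h1 with rfl | h
      · norm_num
      · rw [ih (a-1) (by omega) (by push_cast at h2 ⊢; omega), mul_zero]

lemma H_neg (hq : ∀ n : ℕ, 0 < n → q ^ n ≠ 1) (n : ℕ) (a : ℤ) (ha : a ≤ 0) :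
    Hh q n a = ε a * q ^ c2 a * qq q (1-a).toNat n := by
  induction n with
  | zero => rw [H_base hq, qq_zero, mul_one]
  | succ n ih =>
      rw [H_rec2 hq n a ha, ih, qq_succ,
        show (1-a).toNat + n = ((n:ℤ)+1-a).toNat by omega]
      ring

lemma H_big (hq : ∀ n : ℕ, 0 < n → q ^ n ≠ 1) (n : ℕ) (a : ℤ) (ha : (n:ℤ)+1 ≤ a) :
    Hh q n a = ε (n + a) * q ^ c2 (a - n) * qq q (a - n).toNat n := by
  induction n generalizing a with
  | zero =>
      rw [H_base hq]
      push_cast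
      rw [zero_add, sub_zero, qq_zero, mul_one]
  | succ n ih =>
      have ha' : 1 ≤ a := by push_cast at ha; omega
      rw [H_rec1 hq n a ha', ih (a-1) (by push_cast at ha ⊢; omega)]
      have harg : a - 1 - (n:ℤ) = a - ((n+1:ℕ):ℤ) := by push_cast; ring
      rw [harg, qq_succ,
        show (a - ((n+1:ℕ):ℤ)).toNat + n = (a-1).toNat by push_cast at ha ⊢; omega]
      have hε : ε ((n:ℤ) + (a - 1)) = ε (((n+1:ℕ):ℤ) + a) := eps_congr (by push_cast; omega)
      rw [hε]
      ring

end

section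
variable {q : ℂ}

lemma c2_nat_succ (k : ℕ) : c2 ((k:ℤ)+1) = c2 (k:ℤ) + k := by
  have h := c2_step ((k:ℤ)+1)
  rw [show (k:ℤ)+1-1 = (k:ℤ) by ring] at h
  omega

lemma gbn_mul (hq : ∀ n : ℕ, 0 < n → q ^ n ≠ 1) (u n b : ℕ) (hb : b ≤ n) :
    gbn q (u+n) (u+b) * qp q q n = qq q (u+b+1) (n-b) * qq q (n-b+1) b := by
  rw [gbn_eq (by omega), show u+n - (u+b) = n-b by omega]
  have h1 : qp q q (u+b) * qq q (u+b+1) (n-b) = qp q q (u+n) := by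
    rw [qp_mul_qq]; congr 1; omega
  have h2 : qp q q (n-b) * qq q (n-b+1) b = qp q q n := by
    rw [qp_mul_qq]; congr 1; omega
  rw [div_mul_eq_mul_div, div_eq_iff (mul_ne_zero (qp_ne hq _) (qp_ne hq _))]
  linear_combination (-(qp q q n)) * h1 + (-(qq q (u+b+1) (n-b) * qp q q (u+b))) * h2

/-- key algebraic step identity -/
lemma step_main (M n m : ℕ) (hm : m + 1 ≤ n) :
    q^(m+1) * qq q (m+2) (2*M) * (1 - q^(n-m-1)) + qq q (m+1) (2*M) * (1 - q^(2*M+n+m+1))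
    = (q^(m+1) * qq q (m+2) (2*M) + qq q (m+1) (2*M)) * (1 - q^n) := by
  have cross := qq_cross (q := q) (m+1) (2*M)
  have hp1 : q^(m+1) * q^(n-m-1) = q^n := by rw [← pow_add]; congr 1; omega
  have hp2 : (q^n) * q^(m+1+2*M) = q^(2*M+n+m+1) := by rw [← pow_add]; congr 1; omega
  linear_combination (-(qq q (m+2) (2*M))) * hp1 + (qq q (m+1) (2*M)) * hp2
    + (-(q^n)) * cross

lemma telescope (hq : ∀ n : ℕ, 0 < n → q ^ n ≠ 1) (M n : ℕ) (hn : 1 ≤ n) :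
    ∀ m, m ≤ n - 1 →
    (∑ b ∈ range (m+1), (-1:ℂ)^b * (q ^ c2 ((b:ℤ)+1) * qq q (b+1) (2*M)) * gbn q (2*M+n+n) (2*M+n+b)
      - ∑ c ∈ range m, (-1:ℂ)^c * (q ^ c2 ((c:ℤ)+1) * qq q (c+1) (2*M)) * gbn q (2*M+n+n) (2*M+n+1+c))
      * qp q q n
    = (-1:ℂ)^m * (q ^ c2 ((m:ℤ)+1) * qq q (m+1) (2*M)) * qq q (2*M+n+m+1) (n-m)
        * qq q (n-m) m := by
  intro m
  induction m with
  | zero =>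
      intro _
      rw [Finset.sum_range_one, Finset.sum_range_zero, sub_zero]
      have hg := gbn_mul hq (2*M+n) n 0 (by omega)
      rw [qq_zero, mul_one] at hg
      rw [qq_zero, mul_one]
      linear_combination ((q ^ c2 (((0:ℕ):ℤ)+1) * qq q (0+1) (2*M))) * hg
  | succ m ih =>
      intro hm1
      have hm : m ≤ n - 1 := by omega
      rw [Finset.sum_range_succ
          (fun b => (-1:ℂ)^b * (q ^ c2 ((b:ℤ)+1) * qq q (b+1) (2*M)) * gbn q (2*M+n+n) (2*M+n+b)) (m+1),
        Finset.sum_range_succ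
          (fun c => (-1:ℂ)^c * (q ^ c2 ((c:ℤ)+1) * qq q (c+1) (2*M)) * gbn q (2*M+n+n) (2*M+n+1+c)) m]
      have hD := ih hm
      have hg := gbn_mul hq (2*M+n) n (m+1) (by omega)
      rw [show 2*M+n+(m+1) = 2*M+n+1+m by omega] at hg
      have hc2 : c2 (((m+1:ℕ):ℤ)+1) = c2 ((m:ℤ)+1) + (m+1) := by
        rw [show ((m+1:ℕ):ℤ)+1 = ((m:ℤ)+1)+1 by push_cast; ring]
        have h := c2_step (((m:ℤ)+1)+1)
        rw [show ((m:ℤ)+1)+1-1 = (m:ℤ)+1 by ring] at h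
        omega
      have hr4 : qq q (2*M+n+m+1) (n-m) = (1 - q^(2*M+n+m+1)) * qq q (2*M+n+m+1+1) (n-m-1) := by
        conv_lhs => rw [show n-m = (n-m-1)+1 by omega]
        rw [qq_succ']
      have hq1 : qq q (n-m) (m+1) = qq q (n-m) m * (1 - q^n) := by
        rw [qq_succ, show n-m+m = n by omega]
      have hq2 : qq q (n-m-1) (m+1) = (1 - q^(n-m-1)) * qq q (n-m) m := by
        rw [qq_succ', show n-m-1+1 = n-m by omega]
      have main := step_main (q := q) M n m (by omega)
      have harg2 : qq q (n-(m+1)+1) (m+1) = qq q (n-m) (m+1) := by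
        rw [show n-(m+1)+1 = n-m by omega]
      have harg3 : qq q (2*M+n+(m+1)+1) (n-(m+1)) = qq q (2*M+n+m+1+1) (n-m-1) := by
        rw [show 2*M+n+(m+1)+1 = 2*M+n+m+1+1 by omega, show n-(m+1) = n-m-1 by omega]
      have harg4 : qq q (n-(m+1)) (m+1) = qq q (n-m-1) (m+1) := by
        rw [show n-(m+1) = n-m-1 by omega]
      have hg' : qq q (2*M+n+1+m+1) (n-(m+1)) = qq q (2*M+n+m+1+1) (n-m-1) := by
        rw [show 2*M+n+1+m+1 = 2*M+n+m+1+1 by omega, show n-(m+1) = n-m-1 by omega]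
      rw [hg', harg2] at hg
      calc (∑ b ∈ range (m+1), (-1:ℂ)^b * (q ^ c2 ((b:ℤ)+1) * qq q (b+1) (2*M)) * gbn q (2*M+n+n) (2*M+n+b)
            + (-1:ℂ)^(m+1) * (q ^ c2 (((m+1:ℕ):ℤ)+1) * qq q (m+1+1) (2*M)) * gbn q (2*M+n+n) (2*M+n+(m+1))
          - (∑ c ∈ range m, (-1:ℂ)^c * (q ^ c2 ((c:ℤ)+1) * qq q (c+1) (2*M)) * gbn q (2*M+n+n) (2*M+n+1+c)
            + (-1:ℂ)^m * (q ^ c2 ((m:ℤ)+1) * qq q (m+1) (2*M)) * gbn q (2*M+n+n) (2*M+n+1+m))) * qp q q n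
          = (∑ b ∈ range (m+1), (-1:ℂ)^b * (q ^ c2 ((b:ℤ)+1) * qq q (b+1) (2*M)) * gbn q (2*M+n+n) (2*M+n+b)
            - ∑ c ∈ range m, (-1:ℂ)^c * (q ^ c2 ((c:ℤ)+1) * qq q (c+1) (2*M)) * gbn q (2*M+n+n) (2*M+n+1+c)) * qp q q n
            + ((-1:ℂ)^(m+1) * (q ^ c2 (((m+1:ℕ):ℤ)+1) * qq q (m+1+1) (2*M))
              - (-1:ℂ)^m * (q ^ c2 ((m:ℤ)+1) * qq q (m+1) (2*M)))
              * (gbn q (2*M+n+n) (2*M+n+1+m) * qp q q n) := by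
            rw [show 2*M+n+(m+1) = 2*M+n+1+m by omega]; ring
        _ = _ := by
            rw [hD, hg, hc2, pow_add, harg3, harg4, hq1, hq2, hr4,
              show m+1+1 = m+2 by omega]
            linear_combination ((q ^ c2 ((m:ℤ)+1)) * qq q (2*M+n+m+1+1) (n-m-1)
              * qq q (n-m) m * (-1:ℂ)^m) * main

end

section
variable {q : ℂ}

lemma gb_eq_gbn (N k : ℕ) (h : k ≤ N) : gb q (N:ℤ) (k:ℤ) = gbn q N k := by
  unfold gb gbn
  rw [if_pos ⟨Int.ofNat_nonneg k, by exact_mod_cast h⟩, if_pos h]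
  rw [Int.toNat_natCast, Int.toNat_natCast, show ((N:ℤ) - (k:ℤ)).toNat = N - k by omega]

lemma gb_out {N k : ℤ} (h : ¬(0 ≤ k ∧ k ≤ N)) : gb q N k = 0 := if_neg h

lemma qq_len_one (a : ℕ) : qq q a 1 = 1 - q ^ a := by
  rw [qq_succ, qq_zero, one_mul, add_zero]

lemma final_main (M n : ℕ) :
    (q^n * qq q (n+1) (2*M) + qq q n (2*M)) * (1 - q^n)
      = qq q n (2*M) * (1 - q^(2*M+n+n)) := by
  have cross := qq_cross (q := q) n (2*M)
  have hp : q^n * q^(n+2*M) = q^(2*M+n+n) := by rw [← pow_add]; congr 1; omega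
  linear_combination (q^n) * cross + (-(qq q n (2*M))) * hp

lemma inner_eval (hq : ∀ n : ℕ, 0 < n → q ^ n ≠ 1) (L M : ℕ) (i : ℤ) :
    (∑ᶠ j : ℤ, (-1 : ℂ) ^ (i + j) * q ^ ((i + j) * (i + j - 1) / 2).toNat *
          gb q (2 * L) ((L : ℤ) - i) * gb q (2 * M) ((M : ℤ) - j))
    = gb q (2 * L) ((L : ℤ) - i) * Hh q (2*M) ((M:ℤ) + i) := by
  have hsupp : (Function.support fun j : ℤ => (-1 : ℂ) ^ (i + j) * q ^ ((i + j) * (i + j - 1) / 2).toNat *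
          gb q (2 * L) ((L : ℤ) - i) * gb q (2 * M) ((M : ℤ) - j))
      ⊆ (Finset.Icc (-(M:ℤ)) (M:ℤ) : Finset ℤ) := by
    intro j hj
    simp only [Function.mem_support] at hj
    simp only [Finset.coe_Icc, Set.mem_Icc]
    by_contra hjn
    apply hj
    rw [gb_out (N := 2*(M:ℤ)) (k := (M:ℤ) - j) (by omega), mul_zero]
  rw [finsum_eq_sum_of_support_subset _ hsupp]
  have hmap : (Finset.Icc (-(M:ℤ)) (M:ℤ)) = (Finset.range (2*M+1)).map
      ⟨fun t : ℕ => (M:ℤ) - (t:ℤ), show Function.Injective _ from fun a b hab => by simpa using hab⟩ := by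
    ext x
    simp only [Finset.mem_Icc, Finset.mem_map, Finset.mem_range, Function.Embedding.coeFn_mk]
    constructor
    · rintro ⟨h1, h2⟩
      exact ⟨((M:ℤ) - x).toNat, by omega, by omega⟩
    · rintro ⟨a, ha, rfl⟩
      omega
  rw [hmap, Finset.sum_map]
  unfold Hh
  rw [Finset.mul_sum]
  refine Finset.sum_congr rfl fun t ht => ?_
  simp only [Function.Embedding.coeFn_mk]
  have ht' : t ≤ 2*M := by simp at ht; omega
  have e1 : i + ((M:ℤ) - (t:ℤ)) = (M:ℤ) + i - (t:ℤ) := by ring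
  rw [e1]
  have e2 : ∀ k : ℤ, (k * (k - 1) / 2).toNat = c2 k := fun _ => rfl
  rw [e2, eps_zpow]
  have e3 : ε ((M:ℤ) + i - (t:ℤ)) = ε ((M:ℤ) + i + (t:ℤ)) := eps_congr (by omega)
  rw [e3]
  have e4 : (M:ℤ) - ((M:ℤ) - (t:ℤ)) = ((t:ℕ):ℤ) := by ring
  rw [e4]
  have e5 : (2:ℤ) * (M:ℤ) = ((2*M:ℕ):ℤ) := by push_cast; ring
  rw [e5, gb_eq_gbn (2*M) t ht']
  ring

theorem main_eval (hq : ∀ n : ℕ, 0 < n → q ^ n ≠ 1) (L M : ℕ) :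
    (∑ᶠ i : ℤ, ∑ᶠ j : ℤ,
        (-1 : ℂ) ^ (i + j) * q ^ ((i + j) * (i + j - 1) / 2).toNat *
          gb q (2 * L) ((L : ℤ) - i) * gb q (2 * M) ((M : ℤ) - j))
    = ∑ s ∈ Finset.range (2*L+1), gbn q (2*L) s * Hh q (2*M) ((M:ℤ) + ((L:ℤ) - (s:ℤ))) := by
  have h1 : ∀ i : ℤ, (∑ᶠ j : ℤ, (-1 : ℂ) ^ (i + j) * q ^ ((i + j) * (i + j - 1) / 2).toNat *
          gb q (2 * L) ((L : ℤ) - i) * gb q (2 * M) ((M : ℤ) - j))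
      = gb q (2 * L) ((L : ℤ) - i) * Hh q (2*M) ((M:ℤ) + i) := inner_eval hq L M
  rw [finsum_congr h1]
  have hsupp : (Function.support fun i : ℤ => gb q (2 * L) ((L : ℤ) - i) * Hh q (2*M) ((M:ℤ) + i))
      ⊆ (Finset.Icc (-(L:ℤ)) (L:ℤ) : Finset ℤ) := by
    intro i hi
    simp only [Function.mem_support] at hi
    simp only [Finset.coe_Icc, Set.mem_Icc]
    by_contra hin
    apply hi
    rw [gb_out (N := 2*(L:ℤ)) (k := (L:ℤ) - i) (by omega), zero_mul]
  rw [finsum_eq_sum_of_support_subset _ hsupp]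
  have hmap : (Finset.Icc (-(L:ℤ)) (L:ℤ)) = (Finset.range (2*L+1)).map
      ⟨fun s : ℕ => (L:ℤ) - (s:ℤ), show Function.Injective _ from fun a b hab => by simpa using hab⟩ := by
    ext x
    simp only [Finset.mem_Icc, Finset.mem_map, Finset.mem_range, Function.Embedding.coeFn_mk]
    constructor
    · rintro ⟨h1, h2⟩
      exact ⟨((L:ℤ) - x).toNat, by omega, by omega⟩
    · rintro ⟨a, ha, rfl⟩
      omega
  rw [hmap, Finset.sum_map]
  refine Finset.sum_congr rfl fun s hs => ?_
  simp only [Function.Embedding.coeFn_mk]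
  have hs' : s ≤ 2*L := by simp at hs; omega
  have e4 : (L:ℤ) - ((L:ℤ) - (s:ℤ)) = ((s:ℕ):ℤ) := by ring
  have e5 : (2:ℤ) * (L:ℤ) = ((2*L:ℕ):ℤ) := by push_cast; ring
  rw [e4, e5, gb_eq_gbn (2*L) s hs']

end

end DSKD

open DSKD in
/-- identity (1.9),
`∑_{i,j∈ℤ} (−1)^{i+j} q^{C(i+j,2)} [2L, L−i]_q [2M, M−j]_q = (q;q)_{2L} δ_{L,M}`.
The sums have finite support, so they are expressed with `finsum`; the
polynomial identity in `q` is stated for every complex `q` that is not a root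
of unity. -/
theorem double_sum_kronecker_delta (q : ℂ) (hq : ∀ n : ℕ, 0 < n → q ^ n ≠ 1) (L M : ℕ) :
    (∑ᶠ i : ℤ, ∑ᶠ j : ℤ,
        (-1 : ℂ) ^ (i + j) * q ^ ((i + j) * (i + j - 1) / 2).toNat *
          gb q (2 * L) ((L : ℤ) - i) * gb q (2 * M) ((M : ℤ) - j))
      = if L = M then qp q q (2 * L) else 0 := by
  rw [main_eval hq L M]
  rcases lt_trichotomy L M with hLM | rfl | hLM
  · -- L < M : every term vanishes
    rw [if_neg (by omega)]
    refine Finset.sum_eq_zero fun s hs => ?_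
    have hs' : s ≤ 2*L := by simp at hs; omega
    rw [H_zero hq (2*M) _ (by omega) (by omega), mul_zero]
  · -- L = M
    rw [if_pos rfl]
    rw [Finset.sum_eq_single (2*L)]
    · rw [gbn_self hq, one_mul,
        show (L:ℤ) + ((L:ℤ) - ((2*L:ℕ):ℤ)) = 0 by push_cast; ring,
        H_neg hq (2*L) 0 le_rfl]
      rw [eps_even (Even.zero), show c2 0 = 0 from rfl, pow_zero,
        show ((1:ℤ) - 0).toNat = 1 by omega, qq_one]
      ring
    · intro s hs hne
      have hs' : s ≤ 2*L := by simp at hs; omega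
      have hsl : s < 2*L := by omega
      rw [H_zero hq (2*L) _ (by omega) (by omega), mul_zero]
    · intro h
      exact absurd (Finset.self_mem_range_succ (2*L)) h
  · -- L > M
    rw [if_neg (by omega)]
    obtain ⟨k, rfl⟩ : ∃ k : ℕ, L = M + k + 1 := ⟨L - M - 1, by omega⟩
    set f : ℕ → ℂ := fun s => gbn q (2*(M+k+1)) s * Hh q (2*M) ((M:ℤ) + (((M+k+1:ℕ):ℤ) - (s:ℤ)))
      with hf
    show ∑ s ∈ Finset.range (2*(M+k+1)+1), f s = 0
    have hsplit1 := Finset.sum_Ico_consecutive f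
      (show 0 ≤ k+1 by omega) (show k+1 ≤ 2*(M+k+1)+1 by omega)
    have hsplit2 := Finset.sum_Ico_consecutive f
      (show k+1 ≤ 2*M+k+1 by omega) (show 2*M+k+1 ≤ 2*(M+k+1)+1 by omega)
    rw [Finset.range_eq_Ico, ← hsplit1, ← hsplit2]
    have hmid : ∑ s ∈ Finset.Ico (k+1) (2*M+k+1), f s = 0 := by
      refine Finset.sum_eq_zero fun s hs => ?_
      rw [Finset.mem_Ico] at hs
      rw [hf]
      simp only
      rw [H_zero hq (2*M) _ (by omega) (by omega), mul_zero]
    rw [hmid, zero_add]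
    -- high part
    have hhigh : ∑ s ∈ Finset.Ico (2*M+k+1) (2*(M+k+1)+1), f s
        = ∑ b ∈ Finset.range (k+2),
            (-1:ℂ)^b * (q ^ c2 ((b:ℤ)+1) * qq q (b+1) (2*M))
              * gbn q (2*M+(k+1)+(k+1)) (2*M+(k+1)+b) := by
      rw [Finset.sum_Ico_eq_sum_range, show 2*(M+k+1)+1 - (2*M+k+1) = k+2 by omega]
      refine Finset.sum_congr rfl fun b hb => ?_
      have hb' : b ≤ k+1 := by simp at hb; omega
      rw [hf]
      simp only
      rw [show (M:ℤ) + (((M+k+1:ℕ):ℤ) - ((2*M+k+1+b:ℕ):ℤ)) = -(b:ℤ) by push_cast; ring]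
      rw [H_neg hq (2*M) (-(b:ℤ)) (by omega)]
      rw [eps_neg, eps_natCast, c2_reflect, show (1:ℤ) - (-(b:ℤ)) = (b:ℤ)+1 by ring]
      rw [show ((b:ℤ)+1).toNat = b+1 by omega]
      rw [show 2*(M+k+1) = 2*M+(k+1)+(k+1) by omega, show 2*M+k+1+b = 2*M+(k+1)+b by omega]
      ring
    -- low part
    have hlow : ∑ s ∈ Finset.Ico 0 (k+1), f s
        = -∑ c ∈ Finset.range (k+1),
            (-1:ℂ)^c * (q ^ c2 ((c:ℤ)+1) * qq q (c+1) (2*M))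
              * gbn q (2*M+(k+1)+(k+1)) (2*M+(k+1)+1+c) := by
      rw [← Finset.range_eq_Ico, ← Finset.sum_range_reflect f (k+1), ← Finset.sum_neg_distrib]
      refine Finset.sum_congr rfl fun c hc => ?_
      have hc' : c ≤ k := by simp at hc; omega
      rw [hf]
      simp only
      rw [show k+1-1-c = k-c by omega]
      rw [show (M:ℤ) + (((M+k+1:ℕ):ℤ) - ((k-c:ℕ):ℤ)) = ((2*M:ℕ):ℤ) + 1 + (c:ℤ) by omega]
      rw [H_big hq (2*M) _ (by omega)]
      have hε : ε (((2*M:ℕ):ℤ) + (((2*M:ℕ):ℤ) + 1 + (c:ℤ))) = ε (((c+1:ℕ):ℤ)) :=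
        eps_congr (by push_cast; omega)
      rw [hε, eps_natCast, pow_succ]
      rw [show ((2*M:ℕ):ℤ) + 1 + (c:ℤ) - ((2*M:ℕ):ℤ) = (c:ℤ)+1 by ring]
      rw [show ((c:ℤ)+1).toNat = c+1 by omega]
      rw [show k-c = 2*(M+k+1) - (2*M+(k+1)+1+c) by omega, gbn_symm (by omega)]
      rw [show 2*(M+k+1) = 2*M+(k+1)+(k+1) by omega]
      ring
    rw [hhigh, hlow]
    -- peel the top terms
    rw [Finset.sum_range_succ
      (fun b => (-1:ℂ)^b * (q ^ c2 ((b:ℤ)+1) * qq q (b+1) (2*M))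
        * gbn q (2*M+(k+1)+(k+1)) (2*M+(k+1)+b)) (k+1),
      Finset.sum_range_succ
      (fun c => (-1:ℂ)^c * (q ^ c2 ((c:ℤ)+1) * qq q (c+1) (2*M))
        * gbn q (2*M+(k+1)+(k+1)) (2*M+(k+1)+1+c)) k]
    have htel := telescope hq M (k+1) (by omega) k (by omega)
    have hqpne := qp_ne hq (k+1)
    -- multiply by qp (k+1) and cancel
    apply mul_right_cancel₀ hqpne
    rw [zero_mul]
    have hg1 : gbn q (2*M+(k+1)+(k+1)) (2*M+(k+1)+(k+1)) = 1 := gbn_self hq _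
    rw [show 2*M+(k+1)+1+k = 2*M+(k+1)+(k+1) by omega, hg1]
    -- telescope value simplification
    rw [show (k+1)-k = 1 by omega, show 2*M+(k+1)+k+1 = 2*M+(k+1)+(k+1) by omega,
      qq_len_one, qq_one] at htel
    have hc2 : c2 (((k+1:ℕ):ℤ)+1) = c2 ((k:ℤ)+1) + (k+1) := by
      rw [show ((k+1:ℕ):ℤ)+1 = ((k:ℤ)+1)+1 by push_cast; ring]
      have h := c2_step (((k:ℤ)+1)+1)
      rw [show ((k:ℤ)+1)+1-1 = (k:ℤ)+1 by ring] at h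
      omega
    have hqp : qp q q (k+1) = qp q q k * (1 - q^(k+1)) := qp_succ k
    have hfm := final_main (q := q) M (k+1)
    rw [hqp] at htel
    rw [hc2, hqp]
    linear_combination htel + (-((-1:ℂ)^k * q ^ c2 ((k:ℤ)+1) * qp q q k)) * hfm
end

section
/- (Andrews) For all integers L, M, N ≥ 0, ∑_{i,j,k∈ℤ} (−1)^{i+j+k} q^{C(i+j+k,2)} [2L choose L−i]_q [2M choose M−j]_q [2N choose N−k]_q = (q)_{2L}(q)_{2M}(q)_{2N} / ((q)_{L+M−N} (q)_{L+N−M} (q)_{M+N−L}), where the right-hand side is interpreted as 0 if any of L+M−N, L+N−M, M+N−L is negative; the sum has only finitely many nonzero terms and the identity holds as an identity of polynomials in q. -/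
open Finset

/-- `1/(q;q)_n`, with the convention that it is `0` for `n < 0`. -/
noncomputable def iqp (q : ℂ) (n : ℤ) : ℂ := if 0 ≤ n then (qp q q n.toNat)⁻¹ else 0

open Polynomial

namespace AndrewsAux

variable (q : ℂ)

noncomputable def P (n : ℕ) : ℂ := qp q q n

lemma P_zero : P q 0 = 1 := by simp [P, qp]

lemma P_succ (n : ℕ) : P q (n + 1) = P q n * (1 - q ^ (n + 1)) := by
  rw [P, P, qp, qp, Finset.prod_range_succ]
  congr 1
  rw [pow_succ]; ring

variable {q}
variable (hq : ∀ n : ℕ, 0 < n → q ^ n ≠ 1)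

include hq in
lemma P_ne (n : ℕ) : P q n ≠ 0 := by
  induction n with
  | zero => rw [P_zero]; exact one_ne_zero
  | succ n ih =>
    rw [P_succ]
    exact mul_ne_zero ih (sub_ne_zero.mpr (Ne.symm (hq (n + 1) (Nat.succ_pos n))))

variable (q) in
noncomputable def B (n m : ℕ) : ℂ := if m ≤ n then P q n / (P q m * P q (n - m)) else 0

lemma B_eq {n m : ℕ} (h : m ≤ n) : B q n m = P q n / (P q m * P q (n - m)) := if_pos h

lemma B_of_gt {n m : ℕ} (h : n < m) : B q n m = 0 := if_neg (by omega)

include hq in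
lemma B_zero (n : ℕ) : B q n 0 = 1 := by
  rw [B_eq (Nat.zero_le n), P_zero, Nat.sub_zero, one_mul, div_self (P_ne hq n)]

include hq in
lemma B_self (n : ℕ) : B q n n = 1 := by
  rw [B_eq (le_refl n), Nat.sub_self, P_zero, mul_one, div_self (P_ne hq n)]

include hq in
lemma pascal1 (n m : ℕ) :
    B q (n + 1) (m + 1) = B q n (m + 1) + q ^ (n - m) * B q n m := by
  rcases lt_trichotomy m n with h | rfl | h
  · obtain ⟨a, rfl⟩ : ∃ a, n = m + a + 1 := ⟨n - m - 1, by omega⟩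
    rw [B_eq (by omega), B_eq (by omega), B_eq (by omega)]
    have e1 : m + a + 1 + 1 - (m + 1) = a + 1 := by omega
    have e2 : m + a + 1 - (m + 1) = a := by omega
    have e3 : m + a + 1 - m = a + 1 := by omega
    have e4 : m + a + 1 - m = a + 1 := by omega
    rw [e1, e2, e3]
    have hx : m + a + 1 - m = a + 1 := by omega
    rw [show m + a + 1 + 1 = (m + a + 1) + 1 from rfl]
    rw [P_succ q (m + a + 1), P_succ q a, P_succ q m]
    have h1 := P_ne hq (m + a + 1)
    have h2 := P_ne hq a
    have h3 := P_ne hq m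
    have h4 : (1 : ℂ) - q ^ (a + 1) ≠ 0 := sub_ne_zero.mpr (Ne.symm (hq (a + 1) (by omega)))
    have h5 : (1 : ℂ) - q ^ (m + 1) ≠ 0 := sub_ne_zero.mpr (Ne.symm (hq (m + 1) (by omega)))
    field_simp
    ring
  · rw [B_self hq, B_of_gt (by omega), Nat.sub_self, pow_zero, B_self hq]
    ring
  · rw [B_of_gt (by omega), B_of_gt (by omega), B_of_gt h]
    ring

include hq in
lemma ratio (n m : ℕ) :
    B q (n + 1) m * (1 - q ^ (n + 1 - m)) = (1 - q ^ (n + 1)) * B q n m := by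
  rcases le_or_gt m n with h | h
  · obtain ⟨a, rfl⟩ : ∃ a, n = m + a := ⟨n - m, by omega⟩
    rw [B_eq (by omega), B_eq (by omega)]
    have e1 : m + a + 1 - m = a + 1 := by omega
    have e2 : m + a - m = a := by omega
    rw [e1, e2, P_succ q (m + a), P_succ q a]
    have h1 := P_ne hq (m + a)
    have h2 := P_ne hq a
    have h3 := P_ne hq m
    have h4 : (1 : ℂ) - q ^ (a + 1) ≠ 0 := sub_ne_zero.mpr (Ne.symm (hq (a + 1) (by omega)))
    field_simp
  · rcases eq_or_lt_of_le (Nat.succ_le_of_lt h) with rfl | h'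
    · rw [B_self hq, B_of_gt (by omega), Nat.sub_self, pow_zero]
      ring
    · rw [B_of_gt (by omega), B_of_gt (by omega)]
      ring

include hq in
lemma ratio2 (n j : ℕ) :
    B q n (j + 1) * P q (j + 1) = B q n j * P q j * (1 - q ^ (n - j)) := by
  rcases lt_trichotomy j n with h | rfl | h
  · obtain ⟨a, rfl⟩ : ∃ a, n = j + a + 1 := ⟨n - j - 1, by omega⟩
    rw [B_eq (by omega), B_eq (by omega)]
    have e1 : j + a + 1 - (j + 1) = a := by omega
    have e2 : j + a + 1 - j = a + 1 := by omega
    rw [e1, e2, P_succ q a, P_succ q j]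
    have h1 := P_ne hq (j + a + 1)
    have h2 := P_ne hq a
    have h3 := P_ne hq j
    have h4 : (1 : ℂ) - q ^ (a + 1) ≠ 0 := sub_ne_zero.mpr (Ne.symm (hq (a + 1) (by omega)))
    have h5 : (1 : ℂ) - q ^ (j + 1) ≠ 0 := sub_ne_zero.mpr (Ne.symm (hq (j + 1) (by omega)))
    field_simp
  · rw [B_of_gt (by omega), B_self hq, Nat.sub_self, pow_zero]
    ring
  · rw [B_of_gt (by omega), B_of_gt h]
    ring

include hq in
lemma Bn1P1 (n : ℕ) : B q n 1 * P q 1 = 1 - q ^ n := by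
  cases n with
  | zero => rw [B_of_gt (by omega), pow_zero]; ring
  | succ n =>
    rw [B_eq (by omega), P_succ q n]
    have e : n + 1 - 1 = n := by omega
    rw [e]
    have h1 := P_ne hq n
    have h3 := P_ne hq 1
    field_simp

include hq in
lemma scalarR (p m : ℕ) :
    B q p (m + 1) + B q p m = B q (p + 1) (m + 1) + (1 - q ^ p) * B q (p - 1) m := by
  cases p with
  | zero =>
    rw [pow_zero, sub_self, zero_mul, add_zero, B_of_gt (by omega)]
    cases m with
    | zero => rw [B_zero hq, B_self hq]; ring
    | succ m => rw [B_of_gt (by omega), B_of_gt (by omega)]; ring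
  | succ p =>
    rw [pascal1 hq (p + 1) m]
    have h := ratio hq p m
    simp only [Nat.add_sub_cancel]
    linear_combination h

variable (q) in
noncomputable def H (n : ℕ) : Polynomial ℂ :=
  ∑ m ∈ Finset.range (n + 1), Polynomial.C (B q n m) * Polynomial.X ^ m

lemma H_coeff (n m : ℕ) : (H q n).coeff m = B q n m := by
  rw [H, finset_sum_coeff]
  simp only [coeff_C_mul, coeff_X_pow, mul_ite, mul_one, mul_zero]
  rw [Finset.sum_ite_eq (Finset.range (n + 1)) m (fun i => B q n i)]
  rcases le_or_gt m n with h | h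
  · rw [if_pos (Finset.mem_range.mpr (by omega))]
  · rw [if_neg (by simp [Finset.mem_range]; omega), B_of_gt h]

include hq in
lemma H_zero : H q 0 = 1 := by
  rw [H]
  simp [B_zero hq]

include hq in
lemma Hrec (p : ℕ) :
    (1 + Polynomial.X) * H q p
      = H q (p + 1) + Polynomial.C (1 - q ^ p) * (Polynomial.X * H q (p - 1)) := by
  apply Polynomial.ext
  intro m
  rw [add_mul, one_mul]
  cases m with
  | zero =>
    simp only [coeff_add, mul_coeff_zero, coeff_X_zero, zero_mul, coeff_C_mul, H_coeff,
      add_zero, mul_zero]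
    rw [B_zero hq, B_zero hq]
  | succ m =>
    rw [coeff_add, coeff_add, coeff_X_mul, coeff_C_mul, coeff_X_mul, H_coeff, H_coeff,
      H_coeff, H_coeff]
    exact scalarR hq p m
include hq in
lemma keyStep (m n j : ℕ) :
    B q (m + 2) (j + 1) * B q n (j + 1) * P q (j + 1)
      = B q (m + 1) (j + 1) * B q n (j + 1) * P q (j + 1)
        + (1 - q ^ (m + 1 + n - 2 * j)) * (B q (m + 1) j * B q n j * P q j)
        - (1 - q ^ (m + 1)) * (B q m j * B q n j * P q j) := by
  rcases le_or_gt j n with hjn | hjn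
  · rcases le_or_gt j (m + 1) with hjm | hjm
    · have hp := pascal1 hq (m + 1) j
      have hr2 := ratio2 hq n j
      have hr := ratio hq m j
      have he : m + 1 + n - 2 * j = (m + 1 - j) + (n - j) := by omega
      rw [he, pow_add]
      linear_combination (B q n (j + 1) * P q (j + 1)) * hp
        + (q ^ (m + 1 - j) * B q (m + 1) j) * hr2 - (B q n j * P q j) * hr
    · rw [B_of_gt (show m + 2 < j + 1 by omega), B_of_gt (show m + 1 < j + 1 by omega),
        B_of_gt (show m + 1 < j by omega), B_of_gt (show m < j by omega)]
      ring
  · rw [B_of_gt (show n < j + 1 by omega), B_of_gt (show n < j by omega)]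
    ring

include hq in
lemma H_one : H q 1 = 1 + Polynomial.X := by
  rw [H, Finset.sum_range_succ, Finset.sum_range_one, B_zero hq, B_self hq]
  simp

include hq in
lemma lin (n : ℕ) : ∀ m, H q m * H q n
    = ∑ k ∈ Finset.range (m + 1),
        Polynomial.C (B q m k * B q n k * P q k) * (Polynomial.X ^ k * H q (m + n - 2 * k)) := by
  intro m
  induction m using Nat.twoStepInduction with
  | zero =>
    rw [Finset.sum_range_one, H_zero hq, B_zero hq, B_zero hq, P_zero]
    simp
  | one =>
    rw [Finset.sum_range_succ, Finset.sum_range_one, B_zero hq, B_zero hq, B_self hq, P_zero]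
    have e1 : 1 + n - 2 * 0 = n + 1 := by omega
    have e2 : 1 + n - 2 * 1 = n - 1 := by omega
    rw [e1, e2, H_one hq, Hrec hq n]
    have h1 : (1 : ℂ) * B q n 1 * P q 1 = 1 - q ^ n := by
      rw [one_mul]; exact Bn1P1 hq n
    rw [h1]
    simp
  | more m ih1 ih2 =>
    have hH : H q (m + 2)
        = (1 + Polynomial.X) * H q (m + 1) - Polynomial.C (1 - q ^ (m + 1)) * (Polynomial.X * H q m) := by
      have h := Hrec hq (m + 1)
      simp only [Nat.add_sub_cancel] at h
      rw [show m + 1 + 1 = m + 2 from rfl] at h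
      linear_combination -h
    have expand : H q (m + 2) * H q n
        = (1 + Polynomial.X) * (H q (m + 1) * H q n)
          - Polynomial.C (1 - q ^ (m + 1)) * (Polynomial.X * (H q m * H q n)) := by
      rw [hH]; ring
    rw [expand, ih2, ih1]
    simp only [Finset.mul_sum]
    have e1 : ∀ k ∈ Finset.range (m + 2),
        (1 + Polynomial.X) * (Polynomial.C (B q (m + 1) k * B q n k * P q k)
            * (Polynomial.X ^ k * H q (m + 1 + n - 2 * k)))
        = Polynomial.C (B q (m + 1) k * B q n k * P q k)
            * (Polynomial.X ^ k * H q (m + 2 + n - 2 * k))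
          + Polynomial.C (B q (m + 1) k * B q n k * P q k * (1 - q ^ (m + 1 + n - 2 * k)))
            * (Polynomial.X ^ (k + 1) * H q (m + 2 + n - 2 * (k + 1))) := by
      intro k hk
      have hr := Hrec hq (m + 1 + n - 2 * k)
      have i2 : m + 1 + n - 2 * k - 1 = m + 2 + n - 2 * (k + 1) := by omega
      rw [i2] at hr
      by_cases hc : 2 * k ≤ m + 1 + n
      · have i1 : m + 1 + n - 2 * k + 1 = m + 2 + n - 2 * k := by omega
        rw [i1] at hr
        calc (1 + Polynomial.X) * (Polynomial.C (B q (m + 1) k * B q n k * P q k)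
                * (Polynomial.X ^ k * H q (m + 1 + n - 2 * k)))
            = Polynomial.C (B q (m + 1) k * B q n k * P q k)
                * (Polynomial.X ^ k * ((1 + Polynomial.X) * H q (m + 1 + n - 2 * k))) := by ring
          _ = _ := by rw [hr]; simp only [map_mul]; ring
      · have hz : B q n k = 0 := by
          apply B_of_gt
          simp only [Finset.mem_range] at hk
          omega
        rw [hz]
        simp
    have e2 : ∀ k ∈ Finset.range (m + 1),
        Polynomial.C (1 - q ^ (m + 1)) * (Polynomial.X * (Polynomial.C (B q m k * B q n k * P q k)
            * (Polynomial.X ^ k * H q (m + n - 2 * k))))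
        = Polynomial.C ((1 - q ^ (m + 1)) * (B q m k * B q n k * P q k))
            * (Polynomial.X ^ (k + 1) * H q (m + 2 + n - 2 * (k + 1))) := by
      intro k hk
      have i3 : m + n - 2 * k = m + 2 + n - 2 * (k + 1) := by omega
      rw [i3]
      simp only [map_mul]
      ring
    rw [Finset.sum_congr rfl e1, Finset.sum_congr rfl e2, Finset.sum_add_distrib]
    -- extend the third sum from range (m+1) to range (m+2)
    have e3 : ∑ k ∈ Finset.range (m + 2),
        Polynomial.C ((1 - q ^ (m + 1)) * (B q m k * B q n k * P q k))
          * (Polynomial.X ^ (k + 1) * H q (m + 2 + n - 2 * (k + 1)))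
        = ∑ k ∈ Finset.range (m + 1),
        Polynomial.C ((1 - q ^ (m + 1)) * (B q m k * B q n k * P q k))
          * (Polynomial.X ^ (k + 1) * H q (m + 2 + n - 2 * (k + 1))) := by
      rw [Finset.sum_range_succ, B_of_gt (show m < m + 1 by omega)]
      simp
    rw [← e3]
    -- extend the first sum from range (m+2) to range (m+3)
    have e4 : ∑ k ∈ Finset.range (m + 2 + 1),
        Polynomial.C (B q (m + 1) k * B q n k * P q k)
          * (Polynomial.X ^ k * H q (m + 2 + n - 2 * k))
        = ∑ k ∈ Finset.range (m + 2),
        Polynomial.C (B q (m + 1) k * B q n k * P q k)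
          * (Polynomial.X ^ k * H q (m + 2 + n - 2 * k)) := by
      rw [Finset.sum_range_succ, B_of_gt (show m + 1 < m + 2 by omega)]
      simp
    rw [← e4]
    conv_lhs => rw [Finset.sum_range_succ']
    conv_rhs => rw [Finset.sum_range_succ']
    have hzero : Polynomial.C (B q (m + 1) 0 * B q n 0 * P q 0)
          * (Polynomial.X ^ 0 * H q (m + 2 + n - 2 * 0))
        = Polynomial.C (B q (m + 2) 0 * B q n 0 * P q 0)
          * (Polynomial.X ^ 0 * H q (m + 2 + n - 2 * 0)) := by
      simp only [B_zero hq]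
    have hsum : (∑ k ∈ Finset.range (m + 2),
          Polynomial.C (B q (m + 1) (k + 1) * B q n (k + 1) * P q (k + 1))
            * (Polynomial.X ^ (k + 1) * H q (m + 2 + n - 2 * (k + 1))))
        + (∑ k ∈ Finset.range (m + 2),
          Polynomial.C (B q (m + 1) k * B q n k * P q k * (1 - q ^ (m + 1 + n - 2 * k)))
            * (Polynomial.X ^ (k + 1) * H q (m + 2 + n - 2 * (k + 1))))
        - (∑ k ∈ Finset.range (m + 2),
          Polynomial.C ((1 - q ^ (m + 1)) * (B q m k * B q n k * P q k))
            * (Polynomial.X ^ (k + 1) * H q (m + 2 + n - 2 * (k + 1))))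
        = ∑ k ∈ Finset.range (m + 2),
          Polynomial.C (B q (m + 2) (k + 1) * B q n (k + 1) * P q (k + 1))
            * (Polynomial.X ^ (k + 1) * H q (m + 2 + n - 2 * (k + 1))) := by
      rw [← Finset.sum_add_distrib, ← Finset.sum_sub_distrib]
      apply Finset.sum_congr rfl
      intro k _
      rw [keyStep hq m n k]
      simp only [map_add, map_sub, map_mul]
      ring
    linear_combination hsum + hzero
def tri (m : ℕ) : ℕ := m * (m - 1) / 2

lemma tri_succ (m : ℕ) : tri (m + 1) = tri m + m := by
  cases m with
  | zero => rfl
  | succ m =>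
    unfold tri
    simp only [Nat.add_sub_cancel]
    rw [show (m + 1 + 1) * (m + 1) = (m + 1) * m + 2 * (m + 1) by ring]
    rw [Nat.add_mul_div_left _ _ (by norm_num : (0:ℕ) < 2)]

variable (q) in
noncomputable def s (m : ℕ) : ℂ := (-1 : ℂ) ^ m * q ^ tri m

lemma s_zero : s q 0 = 1 := by simp [s, tri]

lemma s_succ (m : ℕ) : s q (m + 1) = -(q ^ m) * s q m := by
  rw [s, s, tri_succ, pow_add, pow_succ]
  ring

include hq in
lemma qbinom (n : ℕ) (x : ℂ) :
    ∑ m ∈ Finset.range (n + 1), s q m * x ^ m * B q n m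
      = ∏ j ∈ Finset.range n, (1 - x * q ^ j) := by
  induction n with
  | zero =>
    rw [Finset.sum_range_one, Finset.prod_range_zero, s_zero, B_self hq]
    simp
  | succ n ih =>
    rw [Finset.sum_range_succ']
    have step : ∀ m ∈ Finset.range (n + 1),
        s q (m + 1) * x ^ (m + 1) * B q (n + 1) (m + 1)
          = s q (m + 1) * x ^ (m + 1) * B q n (m + 1)
            + (-(q ^ n) * x) * (s q m * x ^ m * B q n m) := by
      intro m hm
      simp only [Finset.mem_range] at hm
      rw [pascal1 hq n m, s_succ]
      have hpow : q ^ m * q ^ (n - m) = q ^ n := by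
        rw [← pow_add]; congr 1; omega
      linear_combination (-(s q m * x ^ (m + 1) * B q n m)) * hpow
    rw [Finset.sum_congr rfl step, Finset.sum_add_distrib, ← Finset.mul_sum, ih]
    have first : ∑ m ∈ Finset.range (n + 1), s q (m + 1) * x ^ (m + 1) * B q n (m + 1)
        = (∏ j ∈ Finset.range n, (1 - x * q ^ j)) - 1 := by
      rw [← ih]
      have h2 := Finset.sum_range_succ' (fun m => s q m * x ^ m * B q n m) (n + 1)
      have h3 := Finset.sum_range_succ (fun m => s q m * x ^ m * B q n m) (n + 1)
      have hz : B q n (n + 1) = 0 := B_of_gt (by omega)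
      rw [hz] at h3
      have h0 : s q 0 * x ^ 0 * B q n 0 = 1 := by
        rw [s_zero, B_zero hq]; simp
      rw [h0] at h2
      linear_combination h3 - h2
    rw [first, Finset.prod_range_succ, s_zero, B_zero hq]
    ring
lemma nat_tri_two (m : ℕ) : 2 * tri m = m * (m - 1) := by
  induction m with
  | zero => rfl
  | succ k ih =>
    rw [tri_succ, Nat.mul_add, ih, Nat.add_sub_cancel]
    cases k with
    | zero => rfl
    | succ j =>
      simp only [Nat.add_sub_cancel]
      ring

lemma int_tri_two (t : ℤ) : 2 * (t * (t - 1) / 2) = t * (t - 1) := by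
  obtain ⟨c, hc⟩ := Int.even_mul_succ_self (t - 1)
  have h : t * (t - 1) = 2 * c := by linear_combination hc
  rw [h, Int.mul_ediv_cancel_left _ (by norm_num : (2:ℤ) ≠ 0)]

lemma int_tri_nonneg (t : ℤ) : 0 ≤ t * (t - 1) / 2 := by
  apply Int.ediv_nonneg _ (by norm_num)
  rcases le_or_gt 1 t with h | h
  · exact mul_nonneg (by omega) (by omega)
  · nlinarith [sq_nonneg t]

variable (q) in
noncomputable def w (t : ℤ) : ℂ := (-1 : ℂ) ^ t * q ^ (t * (t - 1) / 2).toNat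

lemma w_zpow (t : ℤ) : w q t = (-1 : ℂ) ^ t * q ^ (t * (t - 1) / 2) := by
  rw [w]; congr 1; rw [← zpow_natCast q, Int.toNat_of_nonneg (int_tri_nonneg t)]

lemma w_zero : w q 0 = 1 := by simp [w]

lemma w_one : w q 1 = -1 := by simp [w]

lemma neg_one_inv_pow (m : ℕ) : ((-1 : ℂ) ^ m)⁻¹ = (-1) ^ m := by
  rcases Nat.even_or_odd m with h | h
  · rw [h.neg_one_pow]; norm_num
  · rw [h.neg_one_pow]; norm_num

lemma tri_cast (m : ℕ) : ((m : ℤ) * ((m : ℤ) - 1) / 2) = (tri m : ℤ) := by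
  have h1 := int_tri_two (m : ℤ)
  have h2 : 2 * (tri m : ℤ) = (m : ℤ) * ((m : ℤ) - 1) := by
    cases m with
    | zero => simp [tri]
    | succ k =>
      have hn : 2 * tri (k + 1) = (k + 1) * k := by
        rw [nat_tri_two, Nat.add_sub_cancel]
      push_cast
      push_cast at hn
      linarith [hn]
  linarith

lemma Tadd (a b : ℤ) :
    (a - b) * ((a - b) - 1) / 2 = a * (a - 1) / 2 + b * (b - 1) / 2 + b * (1 - a) := by
  have h1 := int_tri_two (a - b)
  have h2 := int_tri_two a
  have h3 := int_tri_two b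
  have hr : (a - b) * ((a - b) - 1) = a * (a - 1) + b * (b - 1) + 2 * (b * (1 - a)) := by ring
  linarith

include hq in
lemma Evanish (r : ℕ) (hr : 1 ≤ r) :
    ∑ m ∈ Finset.range (2 * r + 1), B q (2 * r) m * w q ((r : ℤ) - m) = 0 := by
  by_cases hq0 : q = 0
  · subst hq0
    have hP : ∀ n, P (0 : ℂ) n = 1 := by
      intro n; rw [P, qp]; simp
    have hw : ∀ t : ℤ, (2 ≤ t ∨ t ≤ -1) → w (0 : ℂ) t = 0 := by
      intro t ht
      rw [w, zero_pow, mul_zero]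
      have h2 : 2 ≤ t * (t - 1) := by
        rcases ht with h | h
        · nlinarith
        · nlinarith
      have h3 : 1 ≤ t * (t - 1) / 2 := by
        rw [Int.le_ediv_iff_mul_le (by norm_num : (0:ℤ) < 2)]; omega
      omega
    have hsub : ({r - 1, r} : Finset ℕ) ⊆ Finset.range (2 * r + 1) := by
      intro x hx
      simp only [Finset.mem_insert, Finset.mem_singleton] at hx
      simp only [Finset.mem_range]
      omega
    have hvan : ∀ m ∈ Finset.range (2 * r + 1), m ∉ ({r - 1, r} : Finset ℕ) →
        B (0 : ℂ) (2 * r) m * w (0 : ℂ) ((r : ℤ) - m) = 0 := by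
      intro m hm hnot
      simp only [Finset.mem_insert, Finset.mem_singleton] at hnot
      push_neg at hnot
      rw [hw ((r : ℤ) - m) (by omega), mul_zero]
    rw [← Finset.sum_subset hsub hvan]
    rw [Finset.sum_pair (by omega : r - 1 ≠ r)]
    have hB : ∀ m, m ≤ 2 * r → B (0 : ℂ) (2 * r) m = 1 := by
      intro m hm
      rw [B_eq hm, hP, hP, hP]
      norm_num
    rw [hB (r - 1) (by omega), hB r (by omega)]
    rw [show (r : ℤ) - ((r - 1 : ℕ) : ℤ) = 1 by omega, show (r : ℤ) - (r : ℤ) = 0 by omega]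
    rw [w_one, w_zero]
    ring
  · have term_eq : ∀ m ∈ Finset.range (2 * r + 1),
        B q (2 * r) m * w q ((r : ℤ) - m)
          = ((-1 : ℂ) ^ r * q ^ ((r : ℤ) * ((r : ℤ) - 1) / 2))
            * (s q m * (q ^ ((1 : ℤ) - r)) ^ m * B q (2 * r) m) := by
      intro m _
      rw [w_zpow]
      have hT : ((r : ℤ) - m) * (((r : ℤ) - m) - 1) / 2
          = (r : ℤ) * ((r : ℤ) - 1) / 2 + (tri m : ℤ) + (m : ℤ) * (1 - (r : ℤ)) := by
        rw [Tadd, tri_cast, tri_cast]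
      rw [hT, zpow_add₀ hq0, zpow_add₀ hq0]
      have e1 : ((-1 : ℂ)) ^ ((r : ℤ) - (m : ℤ)) = (-1 : ℂ) ^ r * (-1 : ℂ) ^ m := by
        rw [zpow_sub₀ (by norm_num : (-1 : ℂ) ≠ 0), zpow_natCast, zpow_natCast,
          div_eq_mul_inv, neg_one_inv_pow]
      have e2 : q ^ ((tri m : ℤ)) = q ^ (tri m) := zpow_natCast q (tri m)
      have e3 : q ^ ((m : ℤ) * (1 - (r : ℤ))) = (q ^ ((1 : ℤ) - r)) ^ m := by
        rw [mul_comm, zpow_mul, zpow_natCast]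
      rw [e1, e2, e3, s]
      ring
    rw [Finset.sum_congr rfl term_eq, ← Finset.mul_sum, qbinom hq (2 * r) (q ^ ((1 : ℤ) - r))]
    apply mul_eq_zero_of_right
    apply Finset.prod_eq_zero (Finset.mem_range.mpr (by omega : r - 1 < 2 * r))
    have hx : q ^ ((1 : ℤ) - r) * q ^ (r - 1 : ℕ) = 1 := by
      rw [← zpow_natCast q (r - 1), ← zpow_add₀ hq0,
        show ((1 : ℤ) - r + ((r - 1 : ℕ) : ℤ)) = 0 by omega, zpow_zero]
    rw [hx, sub_self]

include hq in
lemma Efull (r : ℕ) :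
    ∑ m ∈ Finset.range (2 * r + 1), B q (2 * r) m * w q ((r : ℤ) - m)
      = if r = 0 then 1 else 0 := by
  cases r with
  | zero =>
    rw [if_pos rfl, show (2 * 0 : ℕ) = 0 from rfl, Finset.sum_range_one, B_self hq 0]
    norm_num [w_zero]
  | succ k =>
    rw [if_neg (by omega)]
    exact Evanish hq (k + 1) (by omega)
variable (q) in
noncomputable def Lam (σ : ℕ) (f : Polynomial ℂ) : ℂ :=
  ∑ m ∈ Finset.range (2 * σ + 1), f.coeff m * w q ((σ : ℤ) - m)

lemma Lam_sum {ι : Type*} (σ : ℕ) (t : Finset ι) (f : ι → Polynomial ℂ) :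
    Lam q σ (∑ x ∈ t, f x) = ∑ x ∈ t, Lam q σ (f x) := by
  unfold Lam
  simp_rw [Polynomial.finset_sum_coeff, Finset.sum_mul]
  exact Finset.sum_comm

lemma Lam_Cmul (σ : ℕ) (a : ℂ) (f : Polynomial ℂ) :
    Lam q σ (Polynomial.C a * f) = a * Lam q σ f := by
  unfold Lam
  simp_rw [Polynomial.coeff_C_mul, Finset.mul_sum, mul_assoc]

lemma Lam_mono (σ : ℕ) (a : ℂ) (e : ℕ) (he : e ≤ 2 * σ) :
    Lam q σ (Polynomial.C a * Polynomial.X ^ e) = a * w q ((σ : ℤ) - e) := by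
  unfold Lam
  simp_rw [Polynomial.coeff_C_mul, Polynomial.coeff_X_pow, mul_ite, mul_one, mul_zero,
    ite_mul, zero_mul]
  rw [Finset.sum_ite_eq' (Finset.range (2 * σ + 1)) e (fun m => a * w q ((σ : ℤ) - m))]
  rw [if_pos (Finset.mem_range.mpr (by omega))]

lemma Lam_XjH (σ j p : ℕ) (h : j + p ≤ 2 * σ) :
    Lam q σ (Polynomial.X ^ j * H q p)
      = ∑ m ∈ Finset.range (p + 1), B q p m * w q ((σ : ℤ) - ((j + m : ℕ) : ℤ)) := by
  have hx : Polynomial.X ^ j * H q p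
      = ∑ m ∈ Finset.range (p + 1), Polynomial.C (B q p m) * Polynomial.X ^ (j + m) := by
    rw [H, Finset.mul_sum]
    apply Finset.sum_congr rfl
    intro m _
    rw [pow_add]
    ring
  rw [hx, Lam_sum]
  apply Finset.sum_congr rfl
  intro m hm
  simp only [Finset.mem_range] at hm
  rw [Lam_mono σ _ (j + m) (by omega)]
include hq in
lemma core (L M N : ℕ) :
    (∑ a ∈ Finset.range (2 * L + 1), ∑ b ∈ Finset.range (2 * M + 1),
        ∑ c ∈ Finset.range (2 * N + 1),
          B q (2 * L) a * B q (2 * M) b * B q (2 * N) c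
            * w q (((L + M + N : ℕ) : ℤ) - ((a + b + c : ℕ) : ℤ)))
      = ∑ k ∈ Finset.range (2 * L + 1), ∑ l ∈ Finset.range (2 * L + 2 * M - 2 * k + 1),
          B q (2 * L) k * B q (2 * M) k * P q k
            * (B q (2 * L + 2 * M - 2 * k) l * B q (2 * N) l * P q l)
            * (if k + l = L + M + N then 1 else 0) := by
  have hexp : H q (2 * L) * H q (2 * M) * H q (2 * N)
      = ∑ a ∈ Finset.range (2 * L + 1), ∑ b ∈ Finset.range (2 * M + 1),
          ∑ c ∈ Finset.range (2 * N + 1),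
            Polynomial.C (B q (2 * L) a * B q (2 * M) b * B q (2 * N) c)
              * Polynomial.X ^ (a + b + c) := by
    rw [H, H, H, Finset.sum_mul_sum, Finset.sum_mul]
    apply Finset.sum_congr rfl; intro a _
    rw [Finset.sum_mul]
    apply Finset.sum_congr rfl; intro b _
    rw [Finset.mul_sum]
    apply Finset.sum_congr rfl; intro c _
    rw [map_mul, map_mul, pow_add, pow_add]
    ring
  have key : Lam q (L + M + N) (H q (2 * L) * H q (2 * M) * H q (2 * N))
      = ∑ a ∈ Finset.range (2 * L + 1), ∑ b ∈ Finset.range (2 * M + 1),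
          ∑ c ∈ Finset.range (2 * N + 1),
            B q (2 * L) a * B q (2 * M) b * B q (2 * N) c
              * w q (((L + M + N : ℕ) : ℤ) - ((a + b + c : ℕ) : ℤ)) := by
    rw [hexp, Lam_sum]
    apply Finset.sum_congr rfl; intro a ha
    rw [Lam_sum]
    apply Finset.sum_congr rfl; intro b hb
    rw [Lam_sum]
    apply Finset.sum_congr rfl; intro c hc
    simp only [Finset.mem_range] at ha hb hc
    rw [Lam_mono (L + M + N) _ (a + b + c) (by omega)]
  have hflat : H q (2 * L) * H q (2 * M) * H q (2 * N)
      = ∑ k ∈ Finset.range (2 * L + 1), ∑ l ∈ Finset.range (2 * L + 2 * M - 2 * k + 1),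
          Polynomial.C ((B q (2 * L) k * B q (2 * M) k * P q k)
              * (B q (2 * L + 2 * M - 2 * k) l * B q (2 * N) l * P q l))
            * (Polynomial.X ^ (k + l) * H q (2 * L + 2 * M - 2 * k + 2 * N - 2 * l)) := by
    rw [lin hq (2 * M) (2 * L), Finset.sum_mul]
    apply Finset.sum_congr rfl; intro k hk
    rw [show (Polynomial.C (B q (2 * L) k * B q (2 * M) k * P q k)
          * (Polynomial.X ^ k * H q (2 * L + 2 * M - 2 * k))) * H q (2 * N)
        = Polynomial.C (B q (2 * L) k * B q (2 * M) k * P q k)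
          * (Polynomial.X ^ k * (H q (2 * L + 2 * M - 2 * k) * H q (2 * N))) by ring]
    rw [lin hq (2 * N) (2 * L + 2 * M - 2 * k), Finset.mul_sum, Finset.mul_sum]
    apply Finset.sum_congr rfl; intro l hl
    simp only [map_mul]
    rw [pow_add]
    ring
  have key2 : Lam q (L + M + N) (H q (2 * L) * H q (2 * M) * H q (2 * N))
      = ∑ k ∈ Finset.range (2 * L + 1), ∑ l ∈ Finset.range (2 * L + 2 * M - 2 * k + 1),
          B q (2 * L) k * B q (2 * M) k * P q k
            * (B q (2 * L + 2 * M - 2 * k) l * B q (2 * N) l * P q l)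
            * (if k + l = L + M + N then 1 else 0) := by
    rw [hflat, Lam_sum]
    apply Finset.sum_congr rfl; intro k hk
    rw [Lam_sum]
    apply Finset.sum_congr rfl; intro l hl
    rw [Lam_Cmul]
    simp only [Finset.mem_range] at hk hl
    by_cases hk2 : k ≤ 2 * M
    · by_cases hl2 : l ≤ 2 * N
      · have h1 : k ≤ 2 * L := by omega
        have h2 : l ≤ 2 * L + 2 * M - 2 * k := by omega
        have hp2 : 2 * L + 2 * M - 2 * k + 2 * N - 2 * l = 2 * ((L + M + N) - (k + l)) := by
          omega
        have hkl : k + l ≤ L + M + N := by omega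
        rw [Lam_XjH (L + M + N) (k + l) (2 * L + 2 * M - 2 * k + 2 * N - 2 * l) (by omega)]
        rw [hp2]
        have hcong : ∀ m ∈ Finset.range (2 * ((L + M + N) - (k + l)) + 1),
            B q (2 * ((L + M + N) - (k + l))) m
              * w q (((L + M + N : ℕ) : ℤ) - ((k + l + m : ℕ) : ℤ))
            = B q (2 * ((L + M + N) - (k + l))) m
              * w q ((((L + M + N) - (k + l) : ℕ) : ℤ) - (m : ℤ)) := by
          intro m _
          have harg : ((L + M + N : ℕ) : ℤ) - ((k + l + m : ℕ) : ℤ)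
              = (((L + M + N) - (k + l) : ℕ) : ℤ) - (m : ℤ) := by omega
          rw [harg]
        rw [Finset.sum_congr rfl hcong, Efull hq ((L + M + N) - (k + l))]
        have hiff : ((L + M + N) - (k + l) = 0) ↔ (k + l = L + M + N) := by omega
        simp only [hiff]
      · rw [B_of_gt (show 2 * N < l by omega)]
        ring
    · rw [B_of_gt (show 2 * M < k by omega)]
      ring
  rw [← key, key2]
include hq in
lemma eval_double (L M N : ℕ) :
    (∑ k ∈ Finset.range (2 * L + 1), ∑ l ∈ Finset.range (2 * L + 2 * M - 2 * k + 1),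
        B q (2 * L) k * B q (2 * M) k * P q k
          * (B q (2 * L + 2 * M - 2 * k) l * B q (2 * N) l * P q l)
          * (if k + l = L + M + N then 1 else 0))
      = P q (2 * L) * P q (2 * M) * P q (2 * N) *
          iqp q ((L : ℤ) + M - N) * iqp q ((L : ℤ) + N - M) * iqp q ((M : ℤ) + N - L) := by
  by_cases hA : N ≤ L + M ∧ M ≤ L + N ∧ L ≤ M + N
  · obtain ⟨hA1, hA2, hA3⟩ := hA
    have hi1 : iqp q ((L : ℤ) + M - N) = (P q (L + M - N))⁻¹ := by
      rw [iqp, if_pos (by omega)]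
      congr 2
      omega
    have hi2 : iqp q ((L : ℤ) + N - M) = (P q (L + N - M))⁻¹ := by
      rw [iqp, if_pos (by omega)]
      congr 2
      omega
    have hi3 : iqp q ((M : ℤ) + N - L) = (P q (M + N - L))⁻¹ := by
      rw [iqp, if_pos (by omega)]
      congr 2
      omega
    rw [hi1, hi2, hi3]
    rw [Finset.sum_eq_single_of_mem (L + M - N) (Finset.mem_range.mpr (by omega))]
    · rw [show 2 * L + 2 * M - 2 * (L + M - N) = 2 * N by omega]
      rw [Finset.sum_eq_single_of_mem (2 * N) (Finset.mem_range.mpr (by omega))]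
      · rw [if_pos (by omega), B_self hq]
        rw [B_eq (show L + M - N ≤ 2 * L by omega), B_eq (show L + M - N ≤ 2 * M by omega)]
        rw [show 2 * L - (L + M - N) = L + N - M by omega,
          show 2 * M - (L + M - N) = M + N - L by omega]
        have h1 := P_ne hq (L + M - N)
        have h2 := P_ne hq (L + N - M)
        have h3 := P_ne hq (M + N - L)
        field_simp
      · intro l hl hne
        simp only [Finset.mem_range] at hl
        by_cases hkl : L + M - N + l = L + M + N
        · exact absurd (by omega : l = 2 * N) hne
        · rw [if_neg hkl]; ring
    · intro k hk hne
      apply Finset.sum_eq_zero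
      intro l hl
      simp only [Finset.mem_range] at hk hl
      by_cases hkl : k + l = L + M + N
      · by_cases hk2 : k ≤ 2 * M
        · by_cases hl2 : l ≤ 2 * N
          · exact absurd (by omega : k = L + M - N) hne
          · rw [B_of_gt (show 2 * N < l by omega)]; ring
        · rw [B_of_gt (show 2 * M < k by omega)]; ring
      · rw [if_neg hkl]; ring
  · have hz : (∑ k ∈ Finset.range (2 * L + 1), ∑ l ∈ Finset.range (2 * L + 2 * M - 2 * k + 1),
        B q (2 * L) k * B q (2 * M) k * P q k
          * (B q (2 * L + 2 * M - 2 * k) l * B q (2 * N) l * P q l)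
          * (if k + l = L + M + N then 1 else 0)) = 0 := by
      apply Finset.sum_eq_zero
      intro k hk
      apply Finset.sum_eq_zero
      intro l hl
      simp only [Finset.mem_range] at hk hl
      by_cases hkl : k + l = L + M + N
      · by_cases hk2 : k ≤ 2 * M
        · by_cases hl2 : l ≤ 2 * N
          · exfalso; omega
          · rw [B_of_gt (show 2 * N < l by omega)]; ring
        · rw [B_of_gt (show 2 * M < k by omega)]; ring
      · rw [if_neg hkl]; ring
    rw [hz]
    by_cases hc1 : N ≤ L + M
    · by_cases hc2 : M ≤ L + N
      · rw [show iqp q ((M : ℤ) + N - L) = 0 from by rw [iqp, if_neg (by omega)]]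
        ring
      · rw [show iqp q ((L : ℤ) + N - M) = 0 from by rw [iqp, if_neg (by omega)]]
        ring
    · rw [show iqp q ((L : ℤ) + M - N) = 0 from by rw [iqp, if_neg (by omega)]]
      ring
lemma gb_nat (n a : ℕ) : gb q ((n : ℕ) : ℤ) ((a : ℕ) : ℤ) = B q n a := by
  by_cases h : a ≤ n
  · rw [gb, if_pos ⟨Int.natCast_nonneg a, by exact_mod_cast h⟩, B_eq h]
    rw [show ((n : ℤ) - (a : ℤ)) = ((n - a : ℕ) : ℤ) by omega]
    rw [Int.toNat_natCast, Int.toNat_natCast, Int.toNat_natCast]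
    rfl
  · rw [gb, if_neg (by intro hc; exact h (by exact_mod_cast hc.2)), B_of_gt (by omega)]

end AndrewsAux


open AndrewsAux

/-- Andrews' identity (1.7),
`∑_{i,j,k∈ℤ} (−1)^{i+j+k} q^{C(i+j+k,2)} [2L,L−i]_q [2M,M−j]_q [2N,N−k]_q
  = (q)_{2L}(q)_{2M}(q)_{2N} / ((q)_{L+M−N}(q)_{L+N−M}(q)_{M+N−L})`,
with the right side interpreted as `0` when any of `L+M−N, L+N−M, M+N−L`
is negative (via the convention `1/(q)_n = 0` for `n < 0`). -/
theorem andrews_triple_sum_identity (q : ℂ) (hq : ∀ n : ℕ, 0 < n → q ^ n ≠ 1) (L M N : ℕ) :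
    (∑ᶠ i : ℤ, ∑ᶠ j : ℤ, ∑ᶠ k : ℤ,
        (-1 : ℂ) ^ (i + j + k) * q ^ ((i + j + k) * (i + j + k - 1) / 2).toNat *
          gb q (2 * L) ((L : ℤ) - i) * gb q (2 * M) ((M : ℤ) - j) *
          gb q (2 * N) ((N : ℤ) - k))
      = qp q q (2 * L) * qp q q (2 * M) * qp q q (2 * N) *
          iqp q ((L : ℤ) + M - N) * iqp q ((L : ℤ) + N - M) * iqp q ((M : ℤ) + N - L) := by
  have gbz : ∀ (n k : ℤ), ¬(0 ≤ k ∧ k ≤ n) → gb q n k = 0 := fun n k h => if_neg h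
  have hterm0L : ∀ i j k : ℤ, ¬(-(L : ℤ) ≤ i ∧ i ≤ L) →
      (-1 : ℂ) ^ (i + j + k) * q ^ ((i + j + k) * (i + j + k - 1) / 2).toNat *
        gb q (2 * L) ((L : ℤ) - i) * gb q (2 * M) ((M : ℤ) - j) *
        gb q (2 * N) ((N : ℤ) - k) = 0 := by
    intro i j k h
    rw [gbz (2 * (L : ℤ)) ((L : ℤ) - i) (by omega)]
    ring
  have hterm0M : ∀ i j k : ℤ, ¬(-(M : ℤ) ≤ j ∧ j ≤ M) →
      (-1 : ℂ) ^ (i + j + k) * q ^ ((i + j + k) * (i + j + k - 1) / 2).toNat *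
        gb q (2 * L) ((L : ℤ) - i) * gb q (2 * M) ((M : ℤ) - j) *
        gb q (2 * N) ((N : ℤ) - k) = 0 := by
    intro i j k h
    rw [gbz (2 * (M : ℤ)) ((M : ℤ) - j) (by omega)]
    ring
  have hterm0N : ∀ i j k : ℤ, ¬(-(N : ℤ) ≤ k ∧ k ≤ N) →
      (-1 : ℂ) ^ (i + j + k) * q ^ ((i + j + k) * (i + j + k - 1) / 2).toNat *
        gb q (2 * L) ((L : ℤ) - i) * gb q (2 * M) ((M : ℤ) - j) *
        gb q (2 * N) ((N : ℤ) - k) = 0 := by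
    intro i j k h
    rw [gbz (2 * (N : ℤ)) ((N : ℤ) - k) (by omega)]
    ring
  have hsupO : (Function.support fun i : ℤ => ∑ᶠ j : ℤ, ∑ᶠ k : ℤ,
      (-1 : ℂ) ^ (i + j + k) * q ^ ((i + j + k) * (i + j + k - 1) / 2).toNat *
        gb q (2 * L) ((L : ℤ) - i) * gb q (2 * M) ((M : ℤ) - j) *
        gb q (2 * N) ((N : ℤ) - k)) ⊆ ↑(Finset.Icc (-(L : ℤ)) (L : ℤ)) := by
    intro i hi
    simp only [Function.mem_support] at hi
    simp only [Finset.coe_Icc, Set.mem_Icc]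
    by_contra hc
    apply hi
    have h1 : ∀ j : ℤ, (∑ᶠ k : ℤ,
        (-1 : ℂ) ^ (i + j + k) * q ^ ((i + j + k) * (i + j + k - 1) / 2).toNat *
          gb q (2 * L) ((L : ℤ) - i) * gb q (2 * M) ((M : ℤ) - j) *
          gb q (2 * N) ((N : ℤ) - k)) = 0 := by
      intro j
      exact (finsum_congr (fun k => hterm0L i j k (by omega))).trans finsum_zero
    exact (finsum_congr h1).trans finsum_zero
  rw [finsum_eq_finset_sum_of_support_subset _ hsupO]
  have step2 : ∀ i ∈ Finset.Icc (-(L : ℤ)) (L : ℤ), (∑ᶠ j : ℤ, ∑ᶠ k : ℤ,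
      (-1 : ℂ) ^ (i + j + k) * q ^ ((i + j + k) * (i + j + k - 1) / 2).toNat *
        gb q (2 * L) ((L : ℤ) - i) * gb q (2 * M) ((M : ℤ) - j) *
        gb q (2 * N) ((N : ℤ) - k))
      = ∑ j ∈ Finset.Icc (-(M : ℤ)) (M : ℤ), ∑ k ∈ Finset.Icc (-(N : ℤ)) (N : ℤ),
          (-1 : ℂ) ^ (i + j + k) * q ^ ((i + j + k) * (i + j + k - 1) / 2).toNat *
            gb q (2 * L) ((L : ℤ) - i) * gb q (2 * M) ((M : ℤ) - j) *
            gb q (2 * N) ((N : ℤ) - k) := by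
    intro i _
    have hsupM : (Function.support fun j : ℤ => ∑ᶠ k : ℤ,
        (-1 : ℂ) ^ (i + j + k) * q ^ ((i + j + k) * (i + j + k - 1) / 2).toNat *
          gb q (2 * L) ((L : ℤ) - i) * gb q (2 * M) ((M : ℤ) - j) *
          gb q (2 * N) ((N : ℤ) - k)) ⊆ ↑(Finset.Icc (-(M : ℤ)) (M : ℤ)) := by
      intro j hj
      simp only [Function.mem_support] at hj
      simp only [Finset.coe_Icc, Set.mem_Icc]
      by_contra hc
      exact hj ((finsum_congr (fun k => hterm0M i j k (by omega))).trans finsum_zero)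
    rw [finsum_eq_finset_sum_of_support_subset _ hsupM]
    apply Finset.sum_congr rfl
    intro j _
    have hsupN : (Function.support fun k : ℤ =>
        (-1 : ℂ) ^ (i + j + k) * q ^ ((i + j + k) * (i + j + k - 1) / 2).toNat *
          gb q (2 * L) ((L : ℤ) - i) * gb q (2 * M) ((M : ℤ) - j) *
          gb q (2 * N) ((N : ℤ) - k)) ⊆ ↑(Finset.Icc (-(N : ℤ)) (N : ℤ)) := by
      intro k hk
      simp only [Function.mem_support] at hk
      simp only [Finset.coe_Icc, Set.mem_Icc]
      by_contra hc
      exact hk (hterm0N i j k (by omega))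
    rw [finsum_eq_finset_sum_of_support_subset _ hsupN]
  rw [Finset.sum_congr rfl step2]
  have hmap : ∀ V : ℕ, Finset.Icc (-(V : ℤ)) (V : ℤ)
      = (Finset.range (2 * V + 1)).map ⟨fun a : ℕ => (V : ℤ) - (a : ℤ), @id (Function.Injective fun a : ℕ => (V : ℤ) - (a : ℤ)) (fun x y h => by dsimp at h; omega)⟩ := by
    intro V
    ext x
    simp only [Finset.mem_Icc, Finset.mem_map, Finset.mem_range, Function.Embedding.coeFn_mk]
    constructor
    · intro hx
      exact ⟨((V : ℤ) - x).toNat, by omega, by omega⟩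
    · rintro ⟨a, ha, rfl⟩
      omega
  rw [hmap L, hmap M, hmap N]
  simp only [Finset.sum_map, Function.Embedding.coeFn_mk]
  have step3 : ∀ a ∈ Finset.range (2 * L + 1),
      (∑ b ∈ Finset.range (2 * M + 1), ∑ c ∈ Finset.range (2 * N + 1),
        (-1 : ℂ) ^ (((L : ℤ) - a) + ((M : ℤ) - b) + ((N : ℤ) - c))
          * q ^ (((((L : ℤ) - a) + ((M : ℤ) - b) + ((N : ℤ) - c))
              * ((((L : ℤ) - a) + ((M : ℤ) - b) + ((N : ℤ) - c)) - 1) / 2)).toNat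
          * gb q (2 * L) ((L : ℤ) - ((L : ℤ) - a)) * gb q (2 * M) ((M : ℤ) - ((M : ℤ) - b))
          * gb q (2 * N) ((N : ℤ) - ((N : ℤ) - c)))
      = ∑ b ∈ Finset.range (2 * M + 1), ∑ c ∈ Finset.range (2 * N + 1),
          B q (2 * L) a * B q (2 * M) b * B q (2 * N) c
            * w q (((L + M + N : ℕ) : ℤ) - ((a + b + c : ℕ) : ℤ)) := by
    intro a _
    apply Finset.sum_congr rfl
    intro b _
    apply Finset.sum_congr rfl
    intro c _
    have g1 : gb q (2 * (L : ℤ)) ((L : ℤ) - ((L : ℤ) - a)) = B q (2 * L) a := by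
      rw [show ((L : ℤ) - ((L : ℤ) - a)) = ((a : ℕ) : ℤ) by ring,
        show (2 * (L : ℤ)) = ((2 * L : ℕ) : ℤ) by push_cast; ring]
      exact gb_nat (2 * L) a
    have g2 : gb q (2 * (M : ℤ)) ((M : ℤ) - ((M : ℤ) - b)) = B q (2 * M) b := by
      rw [show ((M : ℤ) - ((M : ℤ) - b)) = ((b : ℕ) : ℤ) by ring,
        show (2 * (M : ℤ)) = ((2 * M : ℕ) : ℤ) by push_cast; ring]
      exact gb_nat (2 * M) b
    have g3 : gb q (2 * (N : ℤ)) ((N : ℤ) - ((N : ℤ) - c)) = B q (2 * N) c := by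
      rw [show ((N : ℤ) - ((N : ℤ) - c)) = ((c : ℕ) : ℤ) by ring,
        show (2 * (N : ℤ)) = ((2 * N : ℕ) : ℤ) by push_cast; ring]
      exact gb_nat (2 * N) c
    rw [g1, g2, g3]
    have e4 : (((L : ℤ) - a) + ((M : ℤ) - b) + ((N : ℤ) - c))
        = ((L + M + N : ℕ) : ℤ) - ((a + b + c : ℕ) : ℤ) := by push_cast; ring
    rw [e4]
    simp only [w]
    ring
  rw [Finset.sum_congr rfl step3]
  rw [core hq L M N, eval_double hq L M N]
  rfl
end
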